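/- arXiv:math/0001097 — 9 statements merged into one kernel-verified Lean document; each statement's English description precedes it below -/
import Mathlib

section
/- Three complex numbers α, β, γ are the images under the orthogonal projection P: ℝ³ → ℝ² ≅ ℂ of an orthonormal basis of ℝ³, up to a common nonzero scaling, if and only if α² + β² + γ² = 0 and not all of α, β, γ are zero. (Gauss' fundamental theorem of axonometry) -/
open Complex

private lemma inner_eu3 (x y : EuclideanSpace ℝ (Fin 3)) :
    (inner ℝ x y : ℝ) = x 0 * y 0 + x 1 * y 1 + x 2 * y 2 := by
  simp [PiLp.inner_apply, Fin.sum_univ_three]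
  ring

/-- Gauss' fundamental theorem of axonometry.  `α, β, γ` are, up to a common
nonzero real scaling, the images under the projection `ℝ³ → ℝ² ≅ ℂ` (first two coordinates)
of an orthonormal basis of `ℝ³` iff `α² + β² + γ² = 0` and not all are zero. -/
theorem gauss_axonometry (α β γ : ℂ) :
    (∃ μ : ℝ, μ ≠ 0 ∧ ∃ u : Fin 3 → EuclideanSpace ℝ (Fin 3), Orthonormal ℝ u ∧
      (μ : ℂ) * α = (u 0 0 : ℂ) + (u 0 1 : ℂ) * Complex.I ∧
      (μ : ℂ) * β = (u 1 0 : ℂ) + (u 1 1 : ℂ) * Complex.I ∧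
      (μ : ℂ) * γ = (u 2 0 : ℂ) + (u 2 1 : ℂ) * Complex.I) ↔
    (α ^ 2 + β ^ 2 + γ ^ 2 = 0 ∧ ¬(α = 0 ∧ β = 0 ∧ γ = 0)) := by
  constructor
  · rintro ⟨μ, hμ, u, hu, hα, hβ, hγ⟩
    -- The matrix whose rows are the `u i`.
    set M : Matrix (Fin 3) (Fin 3) ℝ := Matrix.of (fun i j => u i j) with hMdef
    have hM : M * M.transpose = 1 := by
      ext i j
      have h := (orthonormal_iff_ite.mp hu) i j
      rw [inner_eu3] at h
      simp only [Matrix.mul_apply, Fin.sum_univ_three, Matrix.transpose_apply,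
        Matrix.one_apply, hMdef, Matrix.of_apply]
      exact h
    have hM' : M.transpose * M = 1 := mul_eq_one_comm.mp hM
    have col : ∀ i j : Fin 3,
        u 0 i * u 0 j + u 1 i * u 1 j + u 2 i * u 2 j = if i = j then 1 else 0 := by
      intro i j
      have h := congrFun (congrFun hM' i) j
      simpa [Matrix.mul_apply, Fin.sum_univ_three, Matrix.transpose_apply,
        Matrix.one_apply, hMdef] using h
    have c1 : u 0 0 * u 0 0 + u 1 0 * u 1 0 + u 2 0 * u 2 0 = 1 := by simpa using col 0 0
    have c2 : u 0 1 * u 0 1 + u 1 1 * u 1 1 + u 2 1 * u 2 1 = 1 := by simpa using col 1 1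
    have c3 : u 0 0 * u 0 1 + u 1 0 * u 1 1 + u 2 0 * u 2 1 = 0 := by simpa using col 0 1
    have c1' : (u 0 0 : ℂ) * u 0 0 + (u 1 0 : ℂ) * u 1 0 + (u 2 0 : ℂ) * u 2 0 = 1 := by
      rw [← Complex.ofReal_one, ← c1]; simp
    have c2' : (u 0 1 : ℂ) * u 0 1 + (u 1 1 : ℂ) * u 1 1 + (u 2 1 : ℂ) * u 2 1 = 1 := by
      rw [← Complex.ofReal_one, ← c2]; simp
    have c3' : (u 0 0 : ℂ) * u 0 1 + (u 1 0 : ℂ) * u 1 1 + (u 2 0 : ℂ) * u 2 1 = 0 := by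
      rw [← Complex.ofReal_zero, ← c3]; simp
    have key : ((μ : ℂ))^2 * (α ^ 2 + β ^ 2 + γ ^ 2) = 0 := by
      have e : ((μ:ℂ) * α)^2 + ((μ:ℂ) * β)^2 + ((μ:ℂ) * γ)^2 = 0 := by
        rw [hα, hβ, hγ]
        linear_combination c1' + (2*Complex.I)*c3' + (Complex.I^2)*c2' + Complex.I_sq
      linear_combination e
    have hμC : ((μ:ℂ))^2 ≠ 0 := pow_ne_zero 2 (by exact_mod_cast (ofReal_ne_zero.mpr hμ))
    constructor
    · exact (mul_eq_zero.mp key).resolve_left hμC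
    · rintro ⟨rfl, rfl, rfl⟩
      rw [mul_zero] at hα hβ hγ
      have e0 : u 0 0 = 0 := by simpa using (congrArg Complex.re hα).symm
      have e1 : u 1 0 = 0 := by simpa using (congrArg Complex.re hβ).symm
      have e2 : u 2 0 = 0 := by simpa using (congrArg Complex.re hγ).symm
      rw [e0, e1, e2] at c1
      norm_num at c1
  · rintro ⟨hsum, hne⟩
    set a0 := α.re with ha0d; set a1 := β.re with ha1d; set a2 := γ.re with ha2d
    set b0 := α.im with hb0d; set b1 := β.im with hb1d; set b2 := γ.im with hb2d
    have hb' : b0^2 + b1^2 + b2^2 = a0^2 + a1^2 + a2^2 := by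
      have h := congrArg Complex.re hsum
      simp [pow_two, Complex.mul_re] at h
      nlinarith [h]
    have hab : a0*b0 + a1*b1 + a2*b2 = 0 := by
      have h := congrArg Complex.im hsum
      simp [pow_two, Complex.mul_im] at h
      nlinarith [h]
    set s : ℝ := a0^2 + a1^2 + a2^2 with hsd
    have hs : 0 < s := by
      rcases lt_or_eq_of_le (by positivity : (0:ℝ) ≤ s) with h | h
      · exact h
      exfalso
      have hz : a0^2 + a1^2 + a2^2 = 0 := by rw [← hsd]; exact h.symm
      have hzb : b0^2 + b1^2 + b2^2 = 0 := by rw [hb']; exact h.symm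
      have e0 : a0 = 0 := pow_eq_zero_iff two_ne_zero |>.mp
        (le_antisymm (by linarith [sq_nonneg a1, sq_nonneg a2]) (sq_nonneg a0))
      have e1 : a1 = 0 := pow_eq_zero_iff two_ne_zero |>.mp
        (le_antisymm (by linarith [sq_nonneg a0, sq_nonneg a2]) (sq_nonneg a1))
      have e2 : a2 = 0 := pow_eq_zero_iff two_ne_zero |>.mp
        (le_antisymm (by linarith [sq_nonneg a0, sq_nonneg a1]) (sq_nonneg a2))
      have f0 : b0 = 0 := pow_eq_zero_iff two_ne_zero |>.mp
        (le_antisymm (by linarith [sq_nonneg b1, sq_nonneg b2]) (sq_nonneg b0))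
      have f1 : b1 = 0 := pow_eq_zero_iff two_ne_zero |>.mp
        (le_antisymm (by linarith [sq_nonneg b0, sq_nonneg b2]) (sq_nonneg b1))
      have f2 : b2 = 0 := pow_eq_zero_iff two_ne_zero |>.mp
        (le_antisymm (by linarith [sq_nonneg b0, sq_nonneg b1]) (sq_nonneg b2))
      exact hne ⟨Complex.ext e0 f0, Complex.ext e1 f1, Complex.ext e2 f2⟩
    have ht : Real.sqrt s ^ 2 = s := Real.sq_sqrt hs.le
    have ht0 : 0 < Real.sqrt s := Real.sqrt_pos.mpr hs
    set μ : ℝ := (Real.sqrt s)⁻¹ with hμd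
    have hμ0 : μ ≠ 0 := inv_ne_zero ht0.ne'
    have hμ2 : μ^2 * s = 1 := by
      rw [hμd, inv_pow, ht]
      exact inv_mul_cancel₀ hs.ne'
    have hμ4 : μ^4 * s^2 = 1 := by linear_combination (μ^2*s + 1) * hμ2
    set c0 : ℝ := a1*b2 - a2*b1 with hc0d
    set c1 : ℝ := a2*b0 - a0*b2 with hc1d
    set c2 : ℝ := a0*b1 - a1*b0 with hc2d
    have ha : a0^2 + a1^2 + a2^2 = s := rfl
    -- the six row identities
    have R00 : s*(a0^2+b0^2) + c0^2 = s^2 := by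
      rw [hc0d]
      linear_combination (b1^2+b2^2)*ha + (s - a0^2)*hb' + (2*a0*b0 - (a0*b0+a1*b1+a2*b2))*hab
    have R11 : s*(a1^2+b1^2) + c1^2 = s^2 := by
      rw [hc1d]
      linear_combination (b0^2+b2^2)*ha + (s - a1^2)*hb' + (2*a1*b1 - (a0*b0+a1*b1+a2*b2))*hab
    have R22 : s*(a2^2+b2^2) + c2^2 = s^2 := by
      rw [hc2d]
      linear_combination (b0^2+b1^2)*ha + (s - a2^2)*hb' + (2*a2*b2 - (a0*b0+a1*b1+a2*b2))*hab
    have R01 : s*(a0*a1+b0*b1) + c0*c1 = 0 := by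
      rw [hc0d, hc1d]
      linear_combination (-(b0*b1))*ha + (-(a0*a1))*hb' + (a1*b0+a0*b1)*hab
    have R02 : s*(a0*a2+b0*b2) + c0*c2 = 0 := by
      rw [hc0d, hc2d]
      linear_combination (-(b0*b2))*ha + (-(a0*a2))*hb' + (a2*b0+a0*b2)*hab
    have R12 : s*(a1*a2+b1*b2) + c1*c2 = 0 := by
      rw [hc1d, hc2d]
      linear_combination (-(b1*b2))*ha + (-(a1*a2))*hb' + (a2*b1+a1*b2)*hab
    refine ⟨μ, hμ0, ![(WithLp.equiv 2 (Fin 3 → ℝ)).symm ![μ*a0, μ*b0, μ^2*c0],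
      (WithLp.equiv 2 (Fin 3 → ℝ)).symm ![μ*a1, μ*b1, μ^2*c1],
      (WithLp.equiv 2 (Fin 3 → ℝ)).symm ![μ*a2, μ*b2, μ^2*c2]], ?_, ?_, ?_, ?_⟩
    · rw [orthonormal_iff_ite]
      intro i j
      fin_cases i <;> fin_cases j <;>
        simp [PiLp.inner_apply, Fin.sum_univ_three, WithLp.equiv_symm_apply, PiLp.toLp_apply, Fin.ext_iff, -inner_self_eq_norm_sq_to_K]
      · linear_combination μ^4*R00 - (a0^2+b0^2)*μ^2*hμ2 + hμ4
      · linear_combination μ^4*R01 - (a0*a1+b0*b1)*μ^2*hμ2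
      · linear_combination μ^4*R02 - (a0*a2+b0*b2)*μ^2*hμ2
      · linear_combination μ^4*R01 - (a0*a1+b0*b1)*μ^2*hμ2
      · linear_combination μ^4*R11 - (a1^2+b1^2)*μ^2*hμ2 + hμ4
      · linear_combination μ^4*R12 - (a1*a2+b1*b2)*μ^2*hμ2
      · linear_combination μ^4*R02 - (a0*a2+b0*b2)*μ^2*hμ2
      · linear_combination μ^4*R12 - (a1*a2+b1*b2)*μ^2*hμ2
      · linear_combination μ^4*R22 - (a2^2+b2^2)*μ^2*hμ2 + hμ4
    · simp [Complex.ext_iff, WithLp.equiv_symm_apply, PiLp.toLp_apply, ha0d, hb0d]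
    · simp [Complex.ext_iff, WithLp.equiv_symm_apply, PiLp.toLp_apply, ha1d, hb1d]
    · simp [Complex.ext_iff, WithLp.equiv_symm_apply, PiLp.toLp_apply, ha2d, hb2d]
end

section
/- Conversely, if α, β, γ ∈ ℂ satisfy α² + β² + γ² = 0 and (α,β,γ) ≠ (0,0,0), then there exist μ > 0 and an orthonormal basis u₁, u₂, u₃ of ℝ³ such that the projection of uⱼ onto the first two coordinates, viewed as a complex number, equals μ·(α, β, γ respectively). -/
open Complex

set_option maxHeartbeats 1000000

/-- If `α² + β² + γ² = 0` and `(α,β,γ) ≠ (0,0,0)` then there are `μ > 0` and an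
orthonormal basis `u₁, u₂, u₃` of `ℝ³` whose projections to the first two coordinates,
viewed in `ℂ`, are `μα, μβ, μγ`. -/
theorem gauss_axonometry_converse (α β γ : ℂ)
    (h : α ^ 2 + β ^ 2 + γ ^ 2 = 0) (hne : ¬(α = 0 ∧ β = 0 ∧ γ = 0)) :
    ∃ μ : ℝ, 0 < μ ∧ ∃ u : Fin 3 → EuclideanSpace ℝ (Fin 3), Orthonormal ℝ u ∧
      (μ : ℂ) * α = (u 0 0 : ℂ) + (u 0 1 : ℂ) * Complex.I ∧
      (μ : ℂ) * β = (u 1 0 : ℂ) + (u 1 1 : ℂ) * Complex.I ∧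
      (μ : ℂ) * γ = (u 2 0 : ℂ) + (u 2 1 : ℂ) * Complex.I := by
  obtain ⟨hre, him⟩ := Complex.ext_iff.mp h
  simp only [pow_two, Complex.add_re, Complex.add_im, Complex.mul_re, Complex.mul_im,
    Complex.zero_re, Complex.zero_im] at hre him
  set a1 := α.re with ha1; set b1 := α.im with hb1
  set a2 := β.re with ha2; set b2 := β.im with hb2
  set a3 := γ.re with ha3; set b3 := γ.im with hb3
  have hs : 0 < a1 ^ 2 + a2 ^ 2 + a3 ^ 2 := by
    by_contra h0
    push_neg at h0
    have h1 : a1 ^ 2 + a2 ^ 2 + a3 ^ 2 = 0 := le_antisymm h0 (by positivity)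
    apply hne
    simp only [Complex.ext_iff, Complex.zero_re, Complex.zero_im, ← ha1, ← hb1, ← ha2, ← hb2,
      ← ha3, ← hb3]
    refine ⟨⟨?_, ?_⟩, ⟨?_, ?_⟩, ⟨?_, ?_⟩⟩ <;>
      nlinarith [sq_nonneg a1, sq_nonneg a2, sq_nonneg a3, sq_nonneg b1, sq_nonneg b2,
        sq_nonneg b3]
  clear_value a1 b1 a2 b2 a3 b3
  set μ := (Real.sqrt (a1 ^ 2 + a2 ^ 2 + a3 ^ 2))⁻¹ with hμdef
  have hμpos : 0 < μ := by
    rw [hμdef]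
    exact inv_pos.mpr (Real.sqrt_pos.mpr hs)
  have hμ : μ ^ 2 * (a1 ^ 2 + a2 ^ 2 + a3 ^ 2) = 1 := by
    rw [hμdef, inv_pow, Real.sq_sqrt hs.le]
    exact inv_mul_cancel₀ hs.ne'
  clear_value μ
  set M : Matrix (Fin 3) (Fin 3) ℝ := Matrix.of
    ![![μ * a1, μ * b1, μ ^ 2 * (a2 * b3 - a3 * b2)],
      ![μ * a2, μ * b2, μ ^ 2 * (a3 * b1 - a1 * b3)],
      ![μ * a3, μ * b3, μ ^ 2 * (a1 * b2 - a2 * b1)]] with hMdef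
  set N : Matrix (Fin 3) (Fin 3) ℝ := Matrix.of
    ![![μ * a1, μ * a2, μ * a3],
      ![μ * b1, μ * b2, μ * b3],
      ![μ ^ 2 * (a2 * b3 - a3 * b2), μ ^ 2 * (a3 * b1 - a1 * b3),
        μ ^ 2 * (a1 * b2 - a2 * b1)]] with hNdef
  have hNM : N * M = 1 := by
    ext i j
    fin_cases i <;> fin_cases j <;>
      simp [hMdef, hNdef, Matrix.mul_apply, Fin.sum_univ_three, Matrix.one_apply]
    · linear_combination hμ
    · linear_combination (μ ^ 2 / 2) * him
    · ring
    · linear_combination (μ ^ 2 / 2) * him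
    · linear_combination hμ - μ ^ 2 * hre
    · ring
    · ring
    · ring
    · linear_combination (μ ^ 2 * (b1 ^ 2 + b2 ^ 2 + b3 ^ 2) + 1) * hμ - μ ^ 2 * hre -
        (μ ^ 4 * (a1 * b1 + a2 * b2 + a3 * b3) / 2) * him
  have hM : M * N = 1 := mul_eq_one_comm.mp hNM
  have key : ∀ i j, M i 0 * M j 0 + M i 1 * M j 1 + M i 2 * M j 2 =
      if i = j then (1 : ℝ) else 0 := by
    intro i j
    have h2 := congrFun (congrFun hM i) j
    have e0 : N 0 j = M j 0 := by rw [hMdef, hNdef]; fin_cases j <;> simp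
    have e1 : N 1 j = M j 1 := by rw [hMdef, hNdef]; fin_cases j <;> simp
    have e2 : N 2 j = M j 2 := by rw [hMdef, hNdef]; fin_cases j <;> simp
    rw [Matrix.mul_apply, Fin.sum_univ_three, e0, e1, e2, Matrix.one_apply] at h2
    linarith [h2]
  refine ⟨μ, hμpos, fun j => (WithLp.equiv 2 (Fin 3 → ℝ)).symm (M j), ?_, ?_, ?_, ?_⟩
  · rw [orthonormal_iff_ite]
    intro i j
    have hk := key i j
    simpa [PiLp.inner_apply, RCLike.inner_apply, Fin.sum_univ_three,
      WithLp.equiv_symm_apply, PiLp.toLp_apply, add_assoc, mul_comm] using hk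
  all_goals
    simp [hMdef, Complex.ext_iff, Complex.mul_re, Complex.mul_im, WithLp.equiv_symm_apply, PiLp.toLp_apply,
      ← ha1, ← hb1, ← ha2, ← hb2, ← ha3, ← hb3]
end

section
/- Four complex numbers α, β, γ, δ are the orthographic projections of the vertices of a regular tetrahedron in ℝ³ (under projection onto the first two coordinates, identified with ℂ) if and only if (α+β+γ+δ)² = 4(α²+β²+γ²+δ²), with the nondegeneracy condition that not all four points coincide. -/
open Complex

private lemma tetra_core (A1 A2 A3 B1 B2 B3 C1 C2 C3 d : ℝ) (hd : 0 < d)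
    (h1 : A1^2+B1^2+C1^2 = d^2) (h2 : A2^2+B2^2+C2^2 = d^2) (h3 : A3^2+B3^2+C3^2 = d^2)
    (h12 : A1*A2+B1*B2+C1*C2 = d^2/2) (h13 : A1*A3+B1*B3+C1*C3 = d^2/2)
    (h23 : A2*A3+B2*B3+C2*C3 = d^2/2) :
    4*(A1^2+A2^2+A3^2) - (A1+A2+A3)^2 = 2*d^2 ∧
    4*(B1^2+B2^2+B3^2) - (B1+B2+B3)^2 = 2*d^2 ∧
    4*(A1*B1+A2*B2+A3*B3) - (A1+A2+A3)*(B1+B2+B3) = 0 := by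
  have hD2 : (A1*(B2*C3-B3*C2) - A2*(B1*C3-B3*C1) + A3*(B1*C2-B2*C1))^2 = d^6/2 := by
    linear_combination ((A2^2+B2^2+C2^2)*(A3^2+B3^2+C3^2) - (A2*A3+B2*B3+C2*C3)^2) * h1
      + (d^2*(A3^2+B3^2+C3^2) - (A1*A3+B1*B3+C1*C3)^2) * h2
      + (d^4 - (A1*A2+B1*B2+C1*C2)^2) * h3
      + (2*(A1*A3+B1*B3+C1*C3)*(A2*A3+B2*B3+C2*C3) - d^2*((A1*A2+B1*B2+C1*C2) + d^2/2)) * h12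
      + (d^2*(A2*A3+B2*B3+C2*C3) - d^2*((A1*A3+B1*B3+C1*C3) + d^2/2)) * h13
      + (d^4/2 - d^2*((A2*A3+B2*B3+C2*C3) + d^2/2)) * h23
  have hDne : (A1*(B2*C3-B3*C2) - A2*(B1*C3-B3*C1) + A3*(B1*C2-B2*C1)) ≠ 0 := by
    intro h
    rw [h] at hD2
    nlinarith [pow_pos hd 6]
  have Ex1 : 4*(A1*(A1^2+B1^2+C1^2) + A2*(A1*A2+B1*B2+C1*C2) + A3*(A1*A3+B1*B3+C1*C3)) - (A1+A2+A3)*((A1^2+B1^2+C1^2)+(A1*A2+B1*B2+C1*C2)+(A1*A3+B1*B3+C1*C3)) - 2*d^2*A1 = 0 := by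
    linear_combination (4*A1-(A1+A2+A3))*h1 + (4*A2-(A1+A2+A3))*h12 + (4*A3-(A1+A2+A3))*h13
  have Ex2 : 4*(A1*(A1*A2+B1*B2+C1*C2) + A2*(A2^2+B2^2+C2^2) + A3*(A2*A3+B2*B3+C2*C3)) - (A1+A2+A3)*((A1*A2+B1*B2+C1*C2)+(A2^2+B2^2+C2^2)+(A2*A3+B2*B3+C2*C3)) - 2*d^2*A2 = 0 := by
    linear_combination (4*A1-(A1+A2+A3))*h12 + (4*A2-(A1+A2+A3))*h2 + (4*A3-(A1+A2+A3))*h23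
  have Ex3 : 4*(A1*(A1*A3+B1*B3+C1*C3) + A2*(A2*A3+B2*B3+C2*C3) + A3*(A3^2+B3^2+C3^2)) - (A1+A2+A3)*((A1*A3+B1*B3+C1*C3)+(A2*A3+B2*B3+C2*C3)+(A3^2+B3^2+C3^2)) - 2*d^2*A3 = 0 := by
    linear_combination (4*A1-(A1+A2+A3))*h13 + (4*A2-(A1+A2+A3))*h23 + (4*A3-(A1+A2+A3))*h3
  have Ey1 : 4*(B1*(A1^2+B1^2+C1^2) + B2*(A1*A2+B1*B2+C1*C2) + B3*(A1*A3+B1*B3+C1*C3)) - (B1+B2+B3)*((A1^2+B1^2+C1^2)+(A1*A2+B1*B2+C1*C2)+(A1*A3+B1*B3+C1*C3)) - 2*d^2*B1 = 0 := by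
    linear_combination (4*B1-(B1+B2+B3))*h1 + (4*B2-(B1+B2+B3))*h12 + (4*B3-(B1+B2+B3))*h13
  have Ey2 : 4*(B1*(A1*A2+B1*B2+C1*C2) + B2*(A2^2+B2^2+C2^2) + B3*(A2*A3+B2*B3+C2*C3)) - (B1+B2+B3)*((A1*A2+B1*B2+C1*C2)+(A2^2+B2^2+C2^2)+(A2*A3+B2*B3+C2*C3)) - 2*d^2*B2 = 0 := by
    linear_combination (4*B1-(B1+B2+B3))*h12 + (4*B2-(B1+B2+B3))*h2 + (4*B3-(B1+B2+B3))*h23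
  have Ey3 : 4*(B1*(A1*A3+B1*B3+C1*C3) + B2*(A2*A3+B2*B3+C2*C3) + B3*(A3^2+B3^2+C3^2)) - (B1+B2+B3)*((A1*A3+B1*B3+C1*C3)+(A2*A3+B2*B3+C2*C3)+(A3^2+B3^2+C3^2)) - 2*d^2*B3 = 0 := by
    linear_combination (4*B1-(B1+B2+B3))*h13 + (4*B2-(B1+B2+B3))*h23 + (4*B3-(B1+B2+B3))*h3
  have hXX : (4*(A1^2+A2^2+A3^2) - (A1+A2+A3)^2 - 2*d^2) * (A1*(B2*C3-B3*C2) - A2*(B1*C3-B3*C1) + A3*(B1*C2-B2*C1)) = 0 := by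
    linear_combination (B2*C3-B3*C2)*Ex1 + (-(B1*C3-B3*C1))*Ex2 + (B1*C2-B2*C1)*Ex3
  have hYY : (4*(B1^2+B2^2+B3^2) - (B1+B2+B3)^2 - 2*d^2) * (A1*(B2*C3-B3*C2) - A2*(B1*C3-B3*C1) + A3*(B1*C2-B2*C1)) = 0 := by
    linear_combination (-(A2*C3-A3*C2))*Ey1 + (A1*C3-A3*C1)*Ey2 + (-(A1*C2-A2*C1))*Ey3
  have hXY : (4*(A1*B1+A2*B2+A3*B3) - (A1+A2+A3)*(B1+B2+B3)) * (A1*(B2*C3-B3*C2) - A2*(B1*C3-B3*C1) + A3*(B1*C2-B2*C1)) = 0 := by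
    linear_combination (-(A2*C3-A3*C2))*Ex1 + (A1*C3-A3*C1)*Ex2 + (-(A1*C2-A2*C1))*Ex3
  have e1 := (mul_eq_zero.mp hXX).resolve_right hDne
  have e2 := (mul_eq_zero.mp hYY).resolve_right hDne
  have e3 := (mul_eq_zero.mp hXY).resolve_right hDne
  exact ⟨by linarith, by linarith, e3⟩


private lemma tetra_key (p1 p2 p3 q1 q2 q3 u1 u2 u3 r : ℝ)
    (hp : p1^2+p2^2+p3^2 = q1^2+q2^2+q3^2)
    (hq : p1*q1+p2*q2+p3*q3 = 0)
    (hr : r ≠ 0)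
    (hr2 : r^2 = p1^2+p2^2+p3^2) :
    ((p1*u1+p2*u2+p3*u3)/4)^2 + ((q1*u1+q2*u2+q3*u3)/4)^2
      + (((p2*q3-p3*q2)*u1+(p3*q1-p1*q3)*u2+(p1*q2-p2*q1)*u3)/(4*r))^2
    = r^2*(u1^2+u2^2+u3^2)/16 := by
  have key0 : r^2*((p1*u1+p2*u2+p3*u3)^2 + (q1*u1+q2*u2+q3*u3)^2)
      + ((p2*q3-p3*q2)*u1+(p3*q1-p1*q3)*u2+(p1*q2-p2*q1)*u3)^2
      = (r^2)^2*(u1^2+u2^2+u3^2) := by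
    linear_combination ((p1*u1+p2*u2+p3*u3)^2 - (p1^2+p2^2+p3^2)*(u1^2+u2^2+u3^2))*hp
      + (2*(p1*u1+p2*u2+p3*u3)*(q1*u1+q2*u2+q3*u3) - (p1*q1+p2*q2+p3*q3)*(u1^2+u2^2+u3^2))*hq
      + ((p1*u1+p2*u2+p3*u3)^2 + (q1*u1+q2*u2+q3*u3)^2 - ((p1^2+p2^2+p3^2) + r^2)*(u1^2+u2^2+u3^2))*hr2
  field_simp
  linear_combination 16 * key0


set_option maxHeartbeats 1000000

/-- `α, β, γ, δ` are the orthographic projections (first two coordinates,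
identified with `ℂ`) of the vertices of a regular tetrahedron in `ℝ³` iff
`(α+β+γ+δ)² = 4(α²+β²+γ²+δ²)` and not all four points coincide. -/
theorem regular_tetrahedron_projection (α β γ δ : ℂ) :
    (∃ v : Fin 4 → EuclideanSpace ℝ (Fin 3), ∃ d : ℝ, 0 < d ∧
      (∀ i j : Fin 4, i ≠ j → dist (v i) (v j) = d) ∧
      α = (v 0 0 : ℂ) + (v 0 1 : ℂ) * Complex.I ∧
      β = (v 1 0 : ℂ) + (v 1 1 : ℂ) * Complex.I ∧
      γ = (v 2 0 : ℂ) + (v 2 1 : ℂ) * Complex.I ∧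
      δ = (v 3 0 : ℂ) + (v 3 1 : ℂ) * Complex.I) ↔
    ((α + β + γ + δ) ^ 2 = 4 * (α ^ 2 + β ^ 2 + γ ^ 2 + δ ^ 2) ∧
      ¬(α = β ∧ α = γ ∧ α = δ)) := by
  constructor
  · rintro ⟨v, d, hd, hdist, hα, hβ, hγ, hδ⟩
    have e : ∀ i j : Fin 4, i ≠ j →
        (v i 0 - v j 0)^2 + (v i 1 - v j 1)^2 + (v i 2 - v j 2)^2 = d^2 := by
      intro i j hij
      have h1 := hdist i j hij
      rw [EuclideanSpace.dist_eq] at h1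
      have h2 : (∑ k, dist (v i k) (v j k) ^ 2) = d^2 := by
        rw [← h1, Real.sq_sqrt]
        positivity
      simpa [Fin.sum_univ_three, Real.dist_eq, sq_abs] using h2
    have e10 := e 1 0 (by decide)
    have e20 := e 2 0 (by decide)
    have e30 := e 3 0 (by decide)
    have e12 := e 1 2 (by decide)
    have e13 := e 1 3 (by decide)
    have e23 := e 2 3 (by decide)
    obtain ⟨E1, E2, E3⟩ := tetra_core (v 1 0 - v 0 0) (v 2 0 - v 0 0) (v 3 0 - v 0 0)
      (v 1 1 - v 0 1) (v 2 1 - v 0 1) (v 3 1 - v 0 1)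
      (v 1 2 - v 0 2) (v 2 2 - v 0 2) (v 3 2 - v 0 2) d hd
      (by linear_combination e10) (by linear_combination e20) (by linear_combination e30)
      (by linear_combination (e10 + e20 - e12)/2)
      (by linear_combination (e10 + e30 - e13)/2)
      (by linear_combination (e20 + e30 - e23)/2)
    constructor
    · have c1 := congrArg (Complex.ofReal) E1
      have c2 := congrArg (Complex.ofReal) E2
      have c3 := congrArg (Complex.ofReal) E3
      push_cast at c1 c2 c3
      rw [hα, hβ, hγ, hδ]
      linear_combination (-1 : ℂ)*c1 - Complex.I^2*c2 - 2*Complex.I*c3 - 2*(d:ℂ)^2*Complex.I_sq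
    · rintro ⟨hab, hac, had⟩
      have h01 : ((v 0 0 : ℝ) : ℂ) + (v 0 1 : ℝ) * Complex.I = ((v 1 0 : ℝ) : ℂ) + (v 1 1 : ℝ) * Complex.I :=
        hα.symm.trans (hab.trans hβ)
      have h02 : ((v 0 0 : ℝ) : ℂ) + (v 0 1 : ℝ) * Complex.I = ((v 2 0 : ℝ) : ℂ) + (v 2 1 : ℝ) * Complex.I :=
        hα.symm.trans (hac.trans hγ)
      have hx01 : (v 0 0 : ℝ) = v 1 0 := by simpa using congrArg Complex.re h01
      have hy01 : (v 0 1 : ℝ) = v 1 1 := by simpa using congrArg Complex.im h01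
      have hx02 : (v 0 0 : ℝ) = v 2 0 := by simpa using congrArg Complex.re h02
      have hy02 : (v 0 1 : ℝ) = v 2 1 := by simpa using congrArg Complex.im h02
      have hz10 : ((v 1 2 : ℝ) - v 0 2)^2 = d^2 := by
        rw [hx01, hy01] at e10
        linear_combination e10
      have hz20 : ((v 2 2 : ℝ) - v 0 2)^2 = d^2 := by
        rw [hx02, hy02] at e20
        linear_combination e20
      have hz12 : ((v 1 2 : ℝ) - v 2 2)^2 = d^2 := by
        rw [← hx01, ← hy01, hx02, hy02] at e12
        linear_combination e12
      have hm : ((v 1 2 : ℝ) - v 0 2) * ((v 2 2 : ℝ) - v 0 2) = d^2/2 := by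
        linear_combination (hz10 + hz20 - hz12)/2
      have hcontr : d^4 = d^4/4 := by
        calc d^4 = ((v 1 2 : ℝ) - v 0 2)^2 * ((v 2 2 : ℝ) - v 0 2)^2 := by
              rw [hz10, hz20]; ring
        _ = (((v 1 2 : ℝ) - v 0 2) * ((v 2 2 : ℝ) - v 0 2))^2 := by ring
        _ = (d^2/2)^2 := by rw [hm]
        _ = d^4/4 := by ring
      linarith [pow_pos hd 4, hcontr]
  · rintro ⟨hsum, hne⟩
    obtain ⟨xa, ya, rfl⟩ : ∃ a b : ℝ, α = (a : ℂ) + (b : ℝ) * Complex.I :=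
      ⟨α.re, α.im, (Complex.re_add_im α).symm⟩
    obtain ⟨xb, yb, rfl⟩ : ∃ a b : ℝ, β = (a : ℂ) + (b : ℝ) * Complex.I :=
      ⟨β.re, β.im, (Complex.re_add_im β).symm⟩
    obtain ⟨xc, yc, rfl⟩ : ∃ a b : ℝ, γ = (a : ℂ) + (b : ℝ) * Complex.I :=
      ⟨γ.re, γ.im, (Complex.re_add_im γ).symm⟩
    obtain ⟨xd, yd, rfl⟩ : ∃ a b : ℝ, δ = (a : ℂ) + (b : ℝ) * Complex.I :=
      ⟨δ.re, δ.im, (Complex.re_add_im δ).symm⟩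
    have h1 := congrArg Complex.re hsum
    have h2 := congrArg Complex.im hsum
    simp only [pow_two, Complex.add_re, Complex.add_im, Complex.mul_re, Complex.mul_im,
      Complex.ofReal_re, Complex.ofReal_im, Complex.I_re, Complex.I_im, Complex.re_ofNat,
      Complex.im_ofNat, mul_zero, mul_one, zero_mul, one_mul, sub_zero, zero_sub, add_zero,
      zero_add, neg_zero, neg_neg] at h1 h2
    have hp : (xa+xb-xc-xd)^2 + (xa+xc-xb-xd)^2 + (xa+xd-xb-xc)^2
        = (ya+yb-yc-yd)^2 + (ya+yc-yb-yd)^2 + (ya+yd-yb-yc)^2 := by linear_combination -h1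
    have hq : (xa+xb-xc-xd)*(ya+yb-yc-yd) + (xa+xc-xb-xd)*(ya+yc-yb-yd)
        + (xa+xd-xb-xc)*(ya+yd-yb-yc) = 0 := by linear_combination -h2/2
    clear h1 h2 hsum
    have hr2pos : 0 < (xa+xb-xc-xd)^2 + (xa+xc-xb-xd)^2 + (xa+xd-xb-xc)^2 := by
      by_contra hcon
      push_neg at hcon
      have e1 : xa+xb-xc-xd = 0 := by
        nlinarith [sq_nonneg (xa+xb-xc-xd), sq_nonneg (xa+xc-xb-xd), sq_nonneg (xa+xd-xb-xc)]
      have e2 : xa+xc-xb-xd = 0 := by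
        nlinarith [sq_nonneg (xa+xb-xc-xd), sq_nonneg (xa+xc-xb-xd), sq_nonneg (xa+xd-xb-xc)]
      have e3 : xa+xd-xb-xc = 0 := by
        nlinarith [sq_nonneg (xa+xb-xc-xd), sq_nonneg (xa+xc-xb-xd), sq_nonneg (xa+xd-xb-xc)]
      have hqzero : (ya+yb-yc-yd)^2 + (ya+yc-yb-yd)^2 + (ya+yd-yb-yc)^2 ≤ 0 := by
        linarith [hp, hcon]
      have f1 : ya+yb-yc-yd = 0 := by
        nlinarith [sq_nonneg (ya+yb-yc-yd), sq_nonneg (ya+yc-yb-yd), sq_nonneg (ya+yd-yb-yc)]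
      have f2 : ya+yc-yb-yd = 0 := by
        nlinarith [sq_nonneg (ya+yb-yc-yd), sq_nonneg (ya+yc-yb-yd), sq_nonneg (ya+yd-yb-yc)]
      have f3 : ya+yd-yb-yc = 0 := by
        nlinarith [sq_nonneg (ya+yb-yc-yd), sq_nonneg (ya+yc-yb-yd), sq_nonneg (ya+yd-yb-yc)]
      refine hne ⟨?_, ?_, ?_⟩
      · rw [show xa = xb by linarith, show ya = yb by linarith]
      · rw [show xa = xc by linarith, show ya = yc by linarith]
      · rw [show xa = xd by linarith, show ya = yd by linarith]
    set r := Real.sqrt ((xa+xb-xc-xd)^2 + (xa+xc-xb-xd)^2 + (xa+xd-xb-xc)^2) with hrdef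
    have hrpos : 0 < r := Real.sqrt_pos.mpr hr2pos
    have hr2 : r^2 = (xa+xb-xc-xd)^2 + (xa+xc-xb-xd)^2 + (xa+xd-xb-xc)^2 :=
      Real.sq_sqrt hr2pos.le
    have key := fun u1 u2 u3 => tetra_key (xa+xb-xc-xd) (xa+xc-xb-xd) (xa+xd-xb-xc)
      (ya+yb-yc-yd) (ya+yc-yb-yd) (ya+yd-yb-yc) u1 u2 u3 r hp hq hrpos.ne' hr2
    set v : Fin 4 → EuclideanSpace ℝ (Fin 3) :=
      ![!₂[xa, ya, (((xa+xc-xb-xd)*(ya+yd-yb-yc) - (xa+xd-xb-xc)*(ya+yc-yb-yd))+((xa+xd-xb-xc)*(ya+yb-yc-yd) - (xa+xb-xc-xd)*(ya+yd-yb-yc))+((xa+xb-xc-xd)*(ya+yc-yb-yd) - (xa+xc-xb-xd)*(ya+yb-yc-yd)))/(4*r)],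
        !₂[xb, yb, (((xa+xc-xb-xd)*(ya+yd-yb-yc) - (xa+xd-xb-xc)*(ya+yc-yb-yd))-((xa+xd-xb-xc)*(ya+yb-yc-yd) - (xa+xb-xc-xd)*(ya+yd-yb-yc))-((xa+xb-xc-xd)*(ya+yc-yb-yd) - (xa+xc-xb-xd)*(ya+yb-yc-yd)))/(4*r)],
        !₂[xc, yc, (-((xa+xc-xb-xd)*(ya+yd-yb-yc) - (xa+xd-xb-xc)*(ya+yc-yb-yd))+((xa+xd-xb-xc)*(ya+yb-yc-yd) - (xa+xb-xc-xd)*(ya+yd-yb-yc))-((xa+xb-xc-xd)*(ya+yc-yb-yd) - (xa+xc-xb-xd)*(ya+yb-yc-yd)))/(4*r)],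
        !₂[xd, yd, (-((xa+xc-xb-xd)*(ya+yd-yb-yc) - (xa+xd-xb-xc)*(ya+yc-yb-yd))-((xa+xd-xb-xc)*(ya+yb-yc-yd) - (xa+xb-xc-xd)*(ya+yd-yb-yc))+((xa+xb-xc-xd)*(ya+yc-yb-yd) - (xa+xc-xb-xd)*(ya+yb-yc-yd)))/(4*r)]] with hv
    have D01 : dist (v 0) (v 1) = Real.sqrt (r^2/2) := by
      rw [hv, EuclideanSpace.dist_eq]
      congr 1
      simp [Fin.sum_univ_three, Real.dist_eq, _root_.sq_abs]
      linear_combination key 0 2 2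
    have D02 : dist (v 0) (v 2) = Real.sqrt (r^2/2) := by
      rw [hv, EuclideanSpace.dist_eq]
      congr 1
      simp [Fin.sum_univ_three, Real.dist_eq, _root_.sq_abs]
      linear_combination key 2 0 2
    have D03 : dist (v 0) (v 3) = Real.sqrt (r^2/2) := by
      rw [hv, EuclideanSpace.dist_eq]
      congr 1
      simp [Fin.sum_univ_three, Real.dist_eq, _root_.sq_abs]
      linear_combination key 2 2 0
    have D10 : dist (v 1) (v 0) = Real.sqrt (r^2/2) := by
      rw [hv, EuclideanSpace.dist_eq]
      congr 1
      simp [Fin.sum_univ_three, Real.dist_eq, _root_.sq_abs]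
      linear_combination key 0 (-2) (-2)
    have D12 : dist (v 1) (v 2) = Real.sqrt (r^2/2) := by
      rw [hv, EuclideanSpace.dist_eq]
      congr 1
      simp [Fin.sum_univ_three, Real.dist_eq, _root_.sq_abs]
      linear_combination key 2 (-2) 0
    have D13 : dist (v 1) (v 3) = Real.sqrt (r^2/2) := by
      rw [hv, EuclideanSpace.dist_eq]
      congr 1
      simp [Fin.sum_univ_three, Real.dist_eq, _root_.sq_abs]
      linear_combination key 2 0 (-2)
    have D20 : dist (v 2) (v 0) = Real.sqrt (r^2/2) := by
      rw [hv, EuclideanSpace.dist_eq]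
      congr 1
      simp [Fin.sum_univ_three, Real.dist_eq, _root_.sq_abs]
      linear_combination key (-2) 0 (-2)
    have D21 : dist (v 2) (v 1) = Real.sqrt (r^2/2) := by
      rw [hv, EuclideanSpace.dist_eq]
      congr 1
      simp [Fin.sum_univ_three, Real.dist_eq, _root_.sq_abs]
      linear_combination key (-2) 2 0
    have D23 : dist (v 2) (v 3) = Real.sqrt (r^2/2) := by
      rw [hv, EuclideanSpace.dist_eq]
      congr 1
      simp [Fin.sum_univ_three, Real.dist_eq, _root_.sq_abs]
      linear_combination key 0 2 (-2)
    have D30 : dist (v 3) (v 0) = Real.sqrt (r^2/2) := by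
      rw [hv, EuclideanSpace.dist_eq]
      congr 1
      simp [Fin.sum_univ_three, Real.dist_eq, _root_.sq_abs]
      linear_combination key (-2) (-2) 0
    have D31 : dist (v 3) (v 1) = Real.sqrt (r^2/2) := by
      rw [hv, EuclideanSpace.dist_eq]
      congr 1
      simp [Fin.sum_univ_three, Real.dist_eq, _root_.sq_abs]
      linear_combination key (-2) 0 2
    have D32 : dist (v 3) (v 2) = Real.sqrt (r^2/2) := by
      rw [hv, EuclideanSpace.dist_eq]
      congr 1
      simp [Fin.sum_univ_three, Real.dist_eq, _root_.sq_abs]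
      linear_combination key 0 (-2) 2
    refine ⟨v, Real.sqrt (r^2/2), Real.sqrt_pos.mpr (by positivity), ?_, ?_, ?_, ?_, ?_⟩
    · intro i j hij
      fin_cases i <;> fin_cases j <;>
        first | exact absurd rfl hij | exact D01 | exact D02 | exact D03 | exact D10 | exact D12 | exact D13 | exact D20 | exact D21 | exact D23 | exact D30 | exact D31 | exact D32
    · rw [hv]; norm_num
    · rw [hv]; norm_num
    · rw [hv]; rfl
    · rw [hv]; rfl
end

section
/- Let n ≥ 2. Complex numbers z₁, ..., zₙ are eutactic (i.e. there exist μ ≠ 0 and an orthonormal basis u₁, ..., uₙ of ℝⁿ with μ·zⱼ equal to the projection of uⱼ onto the first two coordinates, identified with ℂ) if and only if z₁² + z₂² + ⋯ + zₙ² = 0 and not all zⱼ are zero. -/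
open Complex Matrix

lemma col_orthonormal {n : ℕ} (u : Fin n → EuclideanSpace ℝ (Fin n)) (hu : Orthonormal ℝ u) :
    ∀ a b : Fin n, ∑ j, u j a * u j b = if a = b then 1 else 0 := by
  have h1 : (Matrix.of (fun i k => u i k)) * (Matrix.of (fun i k => u i k))ᵀ = 1 := by
    ext i j
    have h := orthonormal_iff_ite.mp hu i j
    rw [PiLp.inner_apply] at h
    simpa [Matrix.mul_apply, Matrix.one_apply, mul_comm] using h
  have h2 := mul_eq_one_comm.mp h1
  intro a b
  have h3 := congrFun (congrFun h2 a) b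
  simpa [Matrix.mul_apply, Matrix.one_apply] using h3

/-- for `n ≥ 2`, complex numbers `z₁, …, zₙ` are eutactic (some nonzero real
multiple of them is the image of an orthonormal basis of `ℝⁿ` under projection to the first
two coordinates, identified with `ℂ`) iff `z₁² + ⋯ + zₙ² = 0` and not all `zⱼ` are zero. -/
theorem eutactic_iff (n : ℕ) (hn : 2 ≤ n) (z : Fin n → ℂ) :
    (∃ μ : ℝ, μ ≠ 0 ∧ ∃ u : Fin n → EuclideanSpace ℝ (Fin n), Orthonormal ℝ u ∧
      ∀ j : Fin n, (μ : ℂ) * z j =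
        (u j ⟨0, by omega⟩ : ℂ) + (u j ⟨1, by omega⟩ : ℂ) * Complex.I) ↔
    ((∑ j : Fin n, (z j) ^ 2 = 0) ∧ ¬(∀ j, z j = 0)) := by
  set i0 : Fin n := ⟨0, by omega⟩
  set i1 : Fin n := ⟨1, by omega⟩
  have hi01 : i0 ≠ i1 := by simp [i0, i1, Fin.ext_iff]
  constructor
  · rintro ⟨μ, hμ, u, hu, huz⟩
    have key := col_orthonormal u hu
    have h00 : ∑ j, u j i0 * u j i0 = 1 := by simpa using key i0 i0
    have h11 : ∑ j, u j i1 * u j i1 = 1 := by simpa using key i1 i1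
    have h01 : ∑ j, u j i0 * u j i1 = 0 := by simpa [hi01] using key i0 i1
    constructor
    · have hsum : (μ : ℂ)^2 * ∑ j, (z j)^2 = ∑ j, ((u j i0 : ℂ) + (u j i1 : ℂ) * I)^2 := by
        rw [Finset.mul_sum]
        refine Finset.sum_congr rfl fun j _ => ?_
        rw [← mul_pow, huz j]
      have hzero : ∑ j, ((u j i0 : ℂ) + (u j i1 : ℂ) * I)^2 = 0 := by
        have : ∀ j : Fin n, ((u j i0 : ℂ) + (u j i1 : ℂ) * I)^2 =
            ((u j i0 * u j i0 : ℝ) : ℂ) - ((u j i1 * u j i1 : ℝ) : ℂ) +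
            (2 * ((u j i0 * u j i1 : ℝ) : ℂ)) * I := by
          intro j; push_cast; ring_nf; simp [Complex.I_sq]; ring
        rw [Finset.sum_congr rfl fun j _ => this j]
        rw [Finset.sum_add_distrib, Finset.sum_sub_distrib]
        rw [← Finset.sum_mul, ← Finset.mul_sum]
        rw [← Complex.ofReal_sum, ← Complex.ofReal_sum, ← Complex.ofReal_sum]
        rw [h00, h11, h01]
        simp
      have hfin : (μ : ℂ)^2 * ∑ j, (z j)^2 = 0 := hsum.trans hzero
      have hμc : (μ : ℂ) ≠ 0 := by exact_mod_cast hμ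
      exact (mul_eq_zero.mp hfin).resolve_left (pow_ne_zero 2 hμc)
    · intro hall
      have hz0 : ∀ j, u j i0 = 0 := by
        intro j
        have h := huz j
        rw [hall j, mul_zero] at h
        have := congrArg Complex.re h.symm
        simpa using this
      rw [Finset.sum_congr rfl fun j _ => by rw [hz0 j, zero_mul]] at h00
      simp at h00
  · rintro ⟨hsum, hne⟩
    set x : Fin n → ℝ := fun j => (z j).re with hx
    set y : Fin n → ℝ := fun j => (z j).im with hy
    have hre : ∑ j, (x j ^ 2 - y j ^ 2) = 0 := by
      have := congrArg Complex.re hsum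
      simpa [pow_two, Complex.mul_re, x, y] using this
    have him : ∑ j, (x j * y j) = 0 := by
      have h2 : ∑ j, ((z j).re * (z j).im + (z j).im * (z j).re) = 0 := by
        have := congrArg Complex.im hsum
        simpa [pow_two, Complex.mul_im] using this
      have h3 : (∑ j, x j * y j) + ∑ j, y j * x j = 0 := by
        rw [← Finset.sum_add_distrib]; exact h2
      have h4 : ∑ j, y j * x j = ∑ j, x j * y j :=
        Finset.sum_congr rfl fun j _ => mul_comm _ _
      rw [h4] at h3
      linarith
    have hxy : ∑ j, x j ^ 2 = ∑ j, y j ^ 2 := by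
      rw [Finset.sum_sub_distrib] at hre; linarith
    have hxpos : 0 < ∑ j, x j ^ 2 := by
      rcases not_forall.mp hne with ⟨j, hj⟩
      have hne2 : x j ≠ 0 ∨ y j ≠ 0 := by
        by_contra h
        push_neg at h
        exact hj (Complex.ext h.1 h.2)
      have hx2 : 0 < x j ^ 2 + y j ^ 2 := by
        rcases hne2 with h | h <;> positivity
      have hsum2 : 0 < ∑ j, x j ^ 2 + ∑ j, y j ^ 2 := by
        rw [← Finset.sum_add_distrib]
        refine lt_of_lt_of_le hx2 ?_
        exact Finset.single_le_sum (f := fun j => x j ^2 + y j ^2) (fun i _ => by positivity) (Finset.mem_univ j)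
      rw [← hxy] at hsum2; linarith
    set r : ℝ := Real.sqrt (∑ j, x j ^ 2) with hr
    have hrpos : 0 < r := Real.sqrt_pos.mpr hxpos
    have hr2 : r ^ 2 = ∑ j, x j ^ 2 := Real.sq_sqrt hxpos.le
    set v : Fin n → EuclideanSpace ℝ (Fin n) := fun i =>
      if i = i0 then WithLp.toLp 2 (fun j => x j / r) else if i = i1 then WithLp.toLp 2 (fun j => y j / r) else 0 with hv
    have hv0 : v i0 = fun j => x j / r := by simp [hv]
    have hv1 : v i1 = fun j => y j / r := by simp [hv, hi01.symm]
    have hinner : ∀ a b : EuclideanSpace ℝ (Fin n), (inner ℝ a b : ℝ) = ∑ j, a j * b j := by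
      intro a b
      rw [PiLp.inner_apply]
      simp [RCLike.inner_apply, mul_comm]
    have e00 : (inner ℝ (v i0) (v i0) : ℝ) = 1 := by
      rw [hinner]
      have hpt : ∀ j, v i0 j * v i0 j = x j ^ 2 / r ^ 2 := fun j => by
        rw [congrFun hv0 j, div_mul_div_comm, ← sq, ← sq]
      rw [Finset.sum_congr rfl fun j _ => hpt j, ← Finset.sum_div, ← hr2,
        div_self (by positivity)]
    have e11 : (inner ℝ (v i1) (v i1) : ℝ) = 1 := by
      rw [hinner]
      have hpt : ∀ j, v i1 j * v i1 j = y j ^ 2 / r ^ 2 := fun j => by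
        rw [congrFun hv1 j, div_mul_div_comm, ← sq, ← sq]
      rw [Finset.sum_congr rfl fun j _ => hpt j, ← Finset.sum_div, ← hxy, ← hr2,
        div_self (by positivity)]
    have e01 : (inner ℝ (v i0) (v i1) : ℝ) = 0 := by
      rw [hinner]
      have hpt : ∀ j, v i0 j * v i1 j = x j * y j / r ^ 2 := fun j => by
        rw [congrFun hv0 j, congrFun hv1 j, div_mul_div_comm, ← sq]
      rw [Finset.sum_congr rfl fun j _ => hpt j, ← Finset.sum_div, him, zero_div]
    have e10 : (inner ℝ (v i1) (v i0) : ℝ) = 0 := by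
      rw [real_inner_comm]; exact e01
    have hortho : Orthonormal ℝ (Set.restrict ({i0, i1} : Set (Fin n)) v) := by
      rw [orthonormal_iff_ite]
      rintro ⟨i, hi⟩ ⟨j, hj⟩
      change inner ℝ (v i) (v j) = _
      have hn0 : ‖v i0‖ = 1 := (pow_eq_one_iff_of_nonneg (norm_nonneg _) two_ne_zero).mp
        (by rw [← real_inner_self_eq_norm_sq]; exact e00)
      have hn1 : ‖v i1‖ = 1 := (pow_eq_one_iff_of_nonneg (norm_nonneg _) two_ne_zero).mp
        (by rw [← real_inner_self_eq_norm_sq]; exact e11)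
      simp only [Set.mem_insert_iff, Set.mem_singleton_iff] at hi hj
      rcases hi with rfl | rfl <;> rcases hj with rfl | rfl <;>
        simp [e00, e11, e01, e10, Subtype.ext_iff, hi01, hi01.symm, hn0, hn1]
    have card_eq : Module.finrank ℝ (EuclideanSpace ℝ (Fin n)) = Fintype.card (Fin n) := by simp
    obtain ⟨b, hb⟩ := hortho.exists_orthonormalBasis_extension_of_card_eq card_eq
    refine ⟨r⁻¹, inv_ne_zero hrpos.ne', fun j => (WithLp.toLp 2 (fun i => b i j) : EuclideanSpace ℝ (Fin n)), ?_, ?_⟩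
    · rw [orthonormal_iff_ite]
      intro a c
      have := col_orthonormal (⇑b) b.orthonormal a c
      rw [PiLp.inner_apply]
      simpa [mul_comm] using this
    · intro j
      have hb0 : b i0 = v i0 := hb i0 (by simp)
      have hb1 : b i1 = v i1 := hb i1 (by simp)
      have hbj0 : b i0 j = x j / r := by rw [hb0, hv0]
      have hbj1 : b i1 j = y j / r := by rw [hb1, hv1]
      show (↑r⁻¹ : ℂ) * z j = (b i0 j : ℂ) + (b i1 j : ℂ) * I
      rw [hbj0, hbj1]
      have hzj : z j = (x j : ℂ) + (y j : ℂ) * I := (Complex.re_add_im (z j)).symm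
      rw [hzj]
      push_cast
      have : (r : ℂ) ≠ 0 := by exact_mod_cast hrpos.ne'
      field_simp
end

section
/- Hadwiger's theorem: Let V be an m×n real matrix (m ≤ n) whose columns are v₁, ..., vₙ ∈ ℝᵐ. The vectors v₁, ..., vₙ are normalised eutactic (i.e. there is an orthonormal basis u₁, ..., uₙ of ℝⁿ with vⱼ = P(uⱼ) for the standard projection P: ℝⁿ → ℝᵐ onto the first m coordinates) if and only if V Vᵗ = 1 (the m×m identity matrix). -/
open Matrix RealInnerProductSpace

lemma col_orthonormal_of_row {n : ℕ} (W : Matrix (Fin n) (Fin n) ℝ)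
    (h : ∀ k k', ∑ j, W k j * W k' j = if k = k' then 1 else 0) :
    ∀ j j', ∑ k, W k j * W k j' = if j = j' then 1 else 0 := by
  have hWWt : W * Wᵀ = 1 := by
    ext k k'
    simpa [Matrix.mul_apply, Matrix.one_apply] using h k k'
  have hWtW : Wᵀ * W = 1 := mul_eq_one_comm.mp hWWt
  intro j j'
  have := congrFun (congrFun hWtW j) j'
  simpa [Matrix.mul_apply, Matrix.one_apply, mul_comm] using this

/-- Hadwiger: the columns `v₁, …, vₙ` of an `m×n` real matrix `V` (`m ≤ n`)
are normalised eutactic (i.e. `vⱼ = P uⱼ` for some orthonormal basis `u₁, …, uₙ` of `ℝⁿ`,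
where `P` projects onto the first `m` coordinates) iff `V Vᵗ = 1`. -/
theorem hadwiger (m n : ℕ) (hmn : m ≤ n) (V : Matrix (Fin m) (Fin n) ℝ) :
    (∃ u : Fin n → EuclideanSpace ℝ (Fin n), Orthonormal ℝ u ∧
      ∀ (j : Fin n) (i : Fin m), V i j = u j (Fin.castLE hmn i)) ↔
    V * Vᵀ = 1 := by
  constructor
  · rintro ⟨u, hu, huV⟩
    -- W has columns u j; columns are orthonormal
    have hcol : ∀ j j', ∑ k, (fun k j => u j k) k j * (fun k j => u j k) k j'
        = if j = j' then 1 else 0 := by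
      intro j j'
      have := (orthonormal_iff_ite (𝕜 := ℝ)).mp hu j j'
      simpa [PiLp.inner_apply, RCLike.inner_apply, mul_comm] using this
    have hrow := col_orthonormal_of_row (fun k j => u j k)ᵀ
      (by intro k k'; exact hcol k k')
    ext i i'
    have h := hrow (Fin.castLE hmn i) (Fin.castLE hmn i')
    simp only [Matrix.transpose_apply] at h
    have hv : ∑ j, V i j * V i' j = if (Fin.castLE hmn i) = (Fin.castLE hmn i') then 1 else 0 := by
      rw [← h]
      exact Finset.sum_congr rfl fun j _ => by rw [huV j i, huV j i']; rfl
    rw [show (if Fin.castLE hmn i = Fin.castLE hmn i' then (1:ℝ) else 0) = (if i = i' then 1 else 0) from if_congr (by simp [Fin.ext_iff]) rfl rfl] at hv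
    simpa [Matrix.mul_apply, Matrix.one_apply] using hv
  · intro hVVt
    set r : Fin m → EuclideanSpace ℝ (Fin n) := fun i => WithLp.toLp 2 (fun j => V i j) with hr
    have hrow : ∀ i i' : Fin m, (inner ℝ (r i) (r i') : ℝ) = if i = i' then 1 else 0 := by
      intro i i'
      have := congrFun (congrFun hVVt i) i'
      simpa [Matrix.mul_apply, Matrix.one_apply, PiLp.inner_apply, RCLike.inner_apply, hr, mul_comm]
        using this
    set s : Set (Fin n) := {k | (k : ℕ) < m} with hs
    set v : Fin n → EuclideanSpace ℝ (Fin n) :=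
      fun k => if h : (k : ℕ) < m then r ⟨k, h⟩ else 0 with hv
    have hvo : Orthonormal ℝ (s.restrict v) := by
      rw [orthonormal_iff_ite]
      rintro ⟨k, hk⟩ ⟨k', hk'⟩
      have hk2 : (k : ℕ) < m := hk
      have hk2' : (k' : ℕ) < m := hk'
      simp only [Set.restrict_apply, Set.restrict, hv, dif_pos hk2, dif_pos hk2']
      rw [hrow ⟨k, hk2⟩ ⟨k', hk2'⟩]
      congr 1
      simp [Fin.ext_iff, Subtype.ext_iff]
    obtain ⟨b, hb⟩ := hvo.exists_orthonormalBasis_extension_of_card_eq (by simp)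
    -- rows of b are orthonormal; conclude columns orthonormal
    have hbrow : ∀ k k', ∑ j, b k j * b k' j = if k = k' then 1 else 0 := by
      intro k k'
      have := (orthonormal_iff_ite (𝕜 := ℝ)).mp b.orthonormal k k'
      simpa [PiLp.inner_apply, RCLike.inner_apply, mul_comm] using this
    have hbcol := col_orthonormal_of_row (fun k j => b k j) hbrow
    refine ⟨fun j => WithLp.toLp 2 (fun k => b k j), ?_, ?_⟩
    · rw [orthonormal_iff_ite]
      intro j j'
      have := hbcol j j'
      simpa [PiLp.inner_apply, RCLike.inner_apply, mul_comm] using this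
    · intro j i
      have hmem : (Fin.castLE hmn i) ∈ s := by
        simp [hs, i.isLt]
      have := hb (Fin.castLE hmn i) hmem
      have h2 : b (Fin.castLE hmn i) = r i := by
        rw [this, hv]
        simp only [dif_pos (show ((Fin.castLE hmn i : Fin n) : ℕ) < m from i.isLt)]
        congr 1
      show V i j = b (Fin.castLE hmn i) j
      rw [h2]
end

section
/- Let A be the n×(n+1) matrix whose columns are the vertices a₁, ..., a_{n+1} of a non-degenerate simplex in ℝⁿ with centroid at the origin (so A has rank n and Ae = 0, where e is the all-ones vector). Let Q = Aᵗ(AAᵗ)⁻²A. Then points b₁, ..., b_{n+1} ∈ ℝᵐ, assembled as columns of an m×(n+1) matrix B, are the images under the projection P: ℝⁿ → ℝᵐ of the vertices of a simplex congruent to the given one if and only if B Q Bᵗ = 1 (the m×m identity). -/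
open Matrix

private lemma aux_isUnit {n : ℕ} (A : Matrix (Fin n) (Fin (n + 1)) ℝ) (hrank : A.rank = n) :
    IsUnit (A * Aᵀ) := by
  rw [← Matrix.mulVec_surjective_iff_isUnit]
  have h1 : (A * Aᵀ).rank = n := by rw [Matrix.rank_self_mul_transpose, hrank]
  have h2 : LinearMap.range (A * Aᵀ).mulVecLin = ⊤ := by
    apply Submodule.eq_top_of_finrank_eq
    have : (A * Aᵀ).rank = Module.finrank ℝ (LinearMap.range (A * Aᵀ).mulVecLin) := rfl
    rw [← this, h1, Module.finrank_fin_fun]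
  intro y
  obtain ⟨x, hx⟩ := LinearMap.range_eq_top.mp h2 y
  exact ⟨x, hx⟩

private lemma aux_ker {n : ℕ} (A : Matrix (Fin n) (Fin (n + 1)) ℝ) (hrank : A.rank = n)
    (he : A *ᵥ (fun _ => (1 : ℝ)) = 0) {u : Fin (n + 1) → ℝ} (hu : A *ᵥ u = 0) :
    ∃ t : ℝ, u = t • (fun _ => (1 : ℝ)) := by
  have hker : Module.finrank ℝ (LinearMap.ker A.mulVecLin) = 1 := by
    have h := LinearMap.finrank_range_add_finrank_ker A.mulVecLin
    have h2 : (A).rank = Module.finrank ℝ (LinearMap.range A.mulVecLin) := rfl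
    rw [Module.finrank_fin_fun, ← h2, hrank] at h
    omega
  have hne : (fun _ => (1 : ℝ) : Fin (n + 1) → ℝ) ≠ 0 := by
    intro h; simpa using congrFun h 0
  have hmem : (fun _ => (1 : ℝ) : Fin (n + 1) → ℝ) ∈ LinearMap.ker A.mulVecLin := by
    simpa [LinearMap.mem_ker] using he
  have hspan : (ℝ ∙ (fun _ => (1 : ℝ) : Fin (n + 1) → ℝ)) = LinearMap.ker A.mulVecLin := by
    apply Submodule.eq_of_le_of_finrank_le
    · rwa [Submodule.span_singleton_le_iff_mem]
    · rw [hker, finrank_span_singleton hne]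
  have humem : u ∈ (ℝ ∙ (fun _ => (1 : ℝ) : Fin (n + 1) → ℝ)) := by
    rw [hspan]; simpa [LinearMap.mem_ker] using hu
  obtain ⟨t, ht⟩ := Submodule.mem_span_singleton.mp humem
  exact ⟨t, ht.symm⟩

/-- let `A` be the `n×(n+1)` matrix of vertices of a non-degenerate simplex
in `ℝⁿ` with centroid at the origin (`rank A = n`, `A e = 0`), and `Q = Aᵗ(AAᵗ)⁻²A`.
Then the columns of an `m×(n+1)` matrix `B` are the images under projection onto the first
`m` coordinates of the vertices of a simplex congruent to the given one iff `B Q Bᵗ = 1`. -/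
theorem simplex_projection_congruent (m n : ℕ) (hm : m ≤ n)
    (A : Matrix (Fin n) (Fin (n + 1)) ℝ)
    (hrank : A.rank = n) (he : A *ᵥ (fun _ => (1 : ℝ)) = 0)
    (B : Matrix (Fin m) (Fin (n + 1)) ℝ) :
    (∃ U : Matrix (Fin n) (Fin n) ℝ, Uᵀ * U = 1 ∧ ∃ a : Fin n → ℝ,
      ∀ (j : Fin (n + 1)) (i : Fin m),
        B i j = (U *ᵥ (fun k => A k j) + a) (Fin.castLE hm i)) ↔
    B * (Aᵀ * ((A * Aᵀ)⁻¹ ^ 2) * A) * Bᵀ = 1 := by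
  classical
  have hG : IsUnit (A * Aᵀ) := aux_isUnit A hrank
  haveI hGinv : Invertible (A * Aᵀ) := hG.nonempty_invertible.some
  have hGinvT : ((A * Aᵀ)⁻¹)ᵀ = (A * Aᵀ)⁻¹ := by
    rw [Matrix.transpose_nonsing_inv]
    congr 1
    rw [Matrix.transpose_mul, Matrix.transpose_transpose]
  have hrow : ∀ k, ∑ j, A k j = 0 := by
    intro k
    have := congrFun he k
    simpa [Matrix.mulVec, dotProduct] using this
  have hGQG : (A * Aᵀ) * ((A * Aᵀ)⁻¹ ^ 2) * (A * Aᵀ) = 1 := by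
    rw [pow_two]
    calc (A * Aᵀ) * ((A * Aᵀ)⁻¹ * (A * Aᵀ)⁻¹) * (A * Aᵀ)
        = ((A * Aᵀ) * (A * Aᵀ)⁻¹) * ((A * Aᵀ)⁻¹ * (A * Aᵀ)) := by
          simp only [Matrix.mul_assoc]
      _ = 1 := by
          rw [Matrix.mul_inv_of_invertible, Matrix.inv_mul_of_invertible, Matrix.one_mul]
  constructor
  · rintro ⟨U, hU, a, hBa⟩
    have hUUt : U * Uᵀ = 1 := mul_eq_one_comm.mpr hU
    set M : Matrix (Fin m) (Fin n) ℝ := fun i k => if Fin.castLE hm i = k then 1 else 0 with hM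
    set E : Matrix (Fin m) (Fin (n + 1)) ℝ := fun i _ => a (Fin.castLE hm i) with hE
    have hB : B = M * U * A + E := by
      ext i j
      rw [hBa j i]
      simp only [Matrix.add_apply, Matrix.mul_apply]
      simp only [Pi.add_apply, Matrix.mulVec, dotProduct, Matrix.add_apply,
        Matrix.mul_apply, hM, hE, ite_mul, one_mul, zero_mul, Finset.sum_ite_eq,
        Finset.mem_univ, if_true]
    have hEAt : E * Aᵀ = 0 := by
      ext i k
      simp only [Matrix.mul_apply]
      simp [Matrix.mul_apply, hE, ← Finset.mul_sum, hrow k]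
    have hMMt : M * Mᵀ = 1 := by
      ext i i'
      simp only [Matrix.mul_apply, Matrix.transpose_apply]
      simp only [Matrix.mul_apply, hM, Matrix.transpose_apply, ite_mul, one_mul, zero_mul,
        Finset.sum_ite_eq, Finset.mem_univ, if_true, Matrix.one_apply]
      by_cases hii : i = i'
      · simp [hii]
      · rw [if_neg, if_neg hii]
        intro hcontra
        exact hii (Fin.castLE_inj.mp hcontra.symm)
    have hBAt : B * Aᵀ = M * U * (A * Aᵀ) := by
      rw [hB, Matrix.add_mul, hEAt, add_zero, Matrix.mul_assoc (M * U) A Aᵀ]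
    have hABt : A * Bᵀ = (A * Aᵀ) * (Uᵀ * Mᵀ) := by
      have := congrArg Matrix.transpose hBAt
      simpa [Matrix.transpose_mul, Matrix.mul_assoc] using this
    calc B * (Aᵀ * ((A * Aᵀ)⁻¹ ^ 2) * A) * Bᵀ
        = (B * Aᵀ) * ((A * Aᵀ)⁻¹ ^ 2) * (A * Bᵀ) := by simp only [Matrix.mul_assoc]
      _ = (M * U) * ((A * Aᵀ) * ((A * Aᵀ)⁻¹ ^ 2) * (A * Aᵀ)) * (Uᵀ * Mᵀ) := by
          rw [hBAt, hABt]; simp only [Matrix.mul_assoc]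
      _ = M * (U * Uᵀ) * Mᵀ := by rw [hGQG, Matrix.mul_one]; simp only [Matrix.mul_assoc]
      _ = 1 := by rw [hUUt, Matrix.mul_one, hMMt]
  · intro h
    set c : Fin m → ℝ := fun i => (∑ j, B i j) / (n + 1) with hc
    set X : Matrix (Fin m) (Fin n) ℝ := B * Aᵀ * (A * Aᵀ)⁻¹ with hXdef
    -- the projection P = Aᵀ (AAᵀ)⁻¹ A fixes vectors orthogonal to e
    have hPsymm : (Aᵀ * (A * Aᵀ)⁻¹ * A)ᵀ = Aᵀ * (A * Aᵀ)⁻¹ * A := by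
      simp [Matrix.transpose_mul, hGinvT, Matrix.mul_assoc]
    have hAP : A * (Aᵀ * (A * Aᵀ)⁻¹ * A) = A := by
      calc A * (Aᵀ * (A * Aᵀ)⁻¹ * A) = ((A * Aᵀ) * (A * Aᵀ)⁻¹) * A := by
            simp only [Matrix.mul_assoc]
        _ = A := by rw [Matrix.mul_inv_of_invertible, Matrix.one_mul]
    have hPe : (Aᵀ * (A * Aᵀ)⁻¹ * A) *ᵥ (fun _ => (1 : ℝ)) = 0 := by
      rw [← Matrix.mulVec_mulVec, he, Matrix.mulVec_zero]
    have hePvec : (fun _ => (1 : ℝ)) ᵥ* (Aᵀ * (A * Aᵀ)⁻¹ * A) = 0 := by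
      rw [← hPsymm, Matrix.vecMul_transpose]
      exact hPe
    have hfix : ∀ v : Fin (n + 1) → ℝ, (fun _ => (1 : ℝ)) ⬝ᵥ v = 0 →
        (Aᵀ * (A * Aᵀ)⁻¹ * A) *ᵥ v = v := by
      intro v hv
      have hker : A *ᵥ ((Aᵀ * (A * Aᵀ)⁻¹ * A) *ᵥ v - v) = 0 := by
        rw [Matrix.mulVec_sub, Matrix.mulVec_mulVec, hAP, sub_self]
      obtain ⟨t, ht⟩ := aux_ker A hrank he hker
      have hdot : (fun _ => (1 : ℝ)) ⬝ᵥ ((Aᵀ * (A * Aᵀ)⁻¹ * A) *ᵥ v - v) = 0 := by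
        rw [dotProduct_sub, dotProduct_mulVec, hePvec, zero_dotProduct, hv,
          sub_zero]
      rw [ht] at hdot
      have hsum : (fun _ => (1 : ℝ)) ⬝ᵥ (t • (fun _ => (1 : ℝ)) : Fin (n + 1) → ℝ)
          = t * (n + 1) := by
        simp [dotProduct, Finset.mul_sum, mul_comm]
      rw [hsum] at hdot
      have ht0 : t = 0 := by
        have : (n : ℝ) + 1 ≠ 0 := by positivity
        rcases mul_eq_zero.mp hdot with h' | h'
        · exact h'
        · exact absurd h' this
      rw [ht0, zero_smul] at ht
      exact sub_eq_zero.mp ht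
    have hfixrow : ∀ v : Fin (n + 1) → ℝ, (fun _ => (1 : ℝ)) ⬝ᵥ v = 0 →
        v ᵥ* (Aᵀ * (A * Aᵀ)⁻¹ * A) = v := by
      intro v hv
      rw [← hPsymm, Matrix.vecMul_transpose]
      exact hfix v hv
    have hXA : ∀ i j, (X * A) i j = B i j - c i := by
      intro i j
      have hrowsum : (fun _ => (1 : ℝ)) ⬝ᵥ (fun j => B i j - c i) = 0 := by
        have hn1 : ((n : ℝ) + 1) ≠ 0 := by positivity
        simp only [dotProduct, one_mul, Finset.sum_sub_distrib, Finset.sum_const,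
          Finset.card_univ, Fintype.card_fin, nsmul_eq_mul, hc]
        push_cast
        field_simp
        ring
      have hfixed := hfixrow _ hrowsum
      have hXAe : X * A = B * (Aᵀ * (A * Aᵀ)⁻¹ * A) := by
        rw [hXdef]; simp only [Matrix.mul_assoc]
      have hBrow : (fun j => B i j) = (fun j => B i j - c i) + (fun _ => c i) := by
        funext j; simp
      have hrowP : ∀ (N : Matrix (Fin (n + 1)) (Fin (n + 1)) ℝ),
          (B * N) i j = ((fun j => B i j) ᵥ* N) j := by
        intro N
        simp [Matrix.mul_apply, Matrix.vecMul, dotProduct]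
      rw [hXAe, hrowP, hBrow, Matrix.add_vecMul, hfixed]
      have hconst : (fun _ => c i) ᵥ* (Aᵀ * (A * Aᵀ)⁻¹ * A) = 0 := by
        have : (fun _ => c i : Fin (n + 1) → ℝ) = c i • (fun _ => (1 : ℝ)) := by
          funext; simp
        rw [this, Matrix.smul_vecMul, hePvec, smul_zero]
      rw [hconst]
      simp
    have hXXt : X * Xᵀ = 1 := by
      calc X * Xᵀ = B * (Aᵀ * ((A * Aᵀ)⁻¹ ^ 2) * A) * Bᵀ := by
            rw [hXdef]
            simp only [Matrix.transpose_mul, Matrix.transpose_transpose, hGinvT, pow_two,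
              Matrix.mul_assoc]
        _ = 1 := h
    -- extend the orthonormal rows of X to an orthonormal basis
    let v : Fin n → EuclideanSpace ℝ (Fin n) := fun i =>
      if h : (i : ℕ) < m then WithLp.toLp 2 (fun k => X ⟨i, h⟩ k) else 0
    have hvon : Orthonormal ℝ (Set.restrict {i : Fin n | (i : ℕ) < m} v) := by
      rw [orthonormal_iff_ite]
      rintro ⟨i, hi⟩ ⟨i', hi'⟩
      have hi2 : (i : ℕ) < m := hi
      have hi2' : (i' : ℕ) < m := hi'
      have hXX := congrFun (congrFun hXXt ⟨(i : ℕ), hi2⟩) ⟨(i' : ℕ), hi2'⟩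
      simp only [Matrix.mul_apply, Matrix.transpose_apply, Matrix.one_apply] at hXX
      have e : ∀ (j : Fin n) (hj : (j : ℕ) < m), Set.restrict {i : Fin n | (i : ℕ) < m} v ⟨j, hj⟩ =
          WithLp.toLp 2 (fun k => X ⟨(j : ℕ), hj⟩ k) := fun j hj => dif_pos hj
      simp only [e i hi2, e i' hi2']
      simp only [Set.restrict_apply, v, dif_pos hi2, dif_pos hi2', PiLp.inner_apply,
        RCLike.inner_apply, conj_trivial]
      rw [Finset.sum_congr rfl (fun x _ => mul_comm _ _), hXX]
      by_cases hii : (i : ℕ) = (i' : ℕ)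
      · simp [Fin.ext_iff, Subtype.ext_iff, hii]
      · simp [Fin.ext_iff, Subtype.ext_iff, hii]
    obtain ⟨b, hb⟩ := hvon.exists_orthonormalBasis_extension_of_card_eq (by simp)
    refine ⟨fun i k => b i k, ?_, ?_⟩
    · apply mul_eq_one_comm.mpr
      have hUo := b.orthonormal
      rw [orthonormal_iff_ite] at hUo
      ext i i'
      have := hUo i i'
      rw [PiLp.inner_apply] at this
      simp only [RCLike.inner_apply, conj_trivial] at this
      change ∑ x, (b i) x * (b i') x = _
      simpa [mul_comm, Matrix.one_apply] using this
    · refine ⟨fun k => if h : (k : ℕ) < m then c ⟨k, h⟩ else 0, ?_⟩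
      intro j i
      have hmem : (Fin.castLE hm i : Fin n) ∈ {i : Fin n | (i : ℕ) < m} := by
        simp only [Set.mem_setOf_eq, Fin.coe_castLE]
        exact i.isLt
      have hbv : b (Fin.castLE hm i) = v (Fin.castLE hm i) := hb _ hmem
      have hvi : v (Fin.castLE hm i) = WithLp.toLp 2 (fun k => X i k) := by
        simp only [v, Fin.coe_castLE, dif_pos i.isLt]
      have hXAij := hXA i j
      simp only [Pi.add_apply, Matrix.mulVec, dotProduct]
      have hbX : ∀ x, b (Fin.castLE hm i) x = X i x := by
        intro x
        rw [hbv, hvi]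
      have hsum : ∑ x, b (Fin.castLE hm i) x * A x j = (X * A) i j := by
        rw [Matrix.mul_apply]
        exact Finset.sum_congr rfl fun x _ => by rw [hbX x]
      have hdite : (if h : ((Fin.castLE hm i : Fin n) : ℕ) < m
          then c ⟨((Fin.castLE hm i : Fin n) : ℕ), h⟩ else 0) = c i := by
        simp
      rw [hsum, hXAij, hdite]
      ring
end

section
/- With A and Q as above (Q = Aᵗ(AAᵗ)⁻²A, Ae = 0, rank A = n), complex numbers z₁, ..., z_{n+1}, assembled as a column vector z, are the images under orthogonal projection ℝⁿ → ℝ² ≅ ℂ of the vertices of a simplex similar to Σ if and only if zᵗQz = 0 (and z corresponds to a genuinely projected nondegenerate configuration, i.e. z is not identically a single point). -/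
open Matrix Complex

private lemma dot_sq_aux {ι : Type*} [Fintype ι] (p q : ι → ℝ) :
    (∑ k, (((p k : ℂ) + q k * Complex.I) * ((p k : ℂ) + q k * Complex.I))) =
    ((∑ k, p k * p k : ℝ) : ℂ) - ((∑ k, q k * q k : ℝ) : ℂ)
      + 2 * ((∑ k, p k * q k : ℝ) : ℂ) * Complex.I := by
  push_cast
  rw [Finset.mul_sum, Finset.sum_mul, ← Finset.sum_sub_distrib, ← Finset.sum_add_distrib]
  exact Finset.sum_congr rfl fun k _ => by linear_combination (q k : ℂ)^2 * Complex.I_sq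

private lemma sum_ofReal_mul {ι : Type*} [Fintype ι] (f g h : ι → ℝ) (c d : ℝ) :
    (∑ k, (f k : ℂ) * ((g k : ℂ) + (h k : ℂ) * Complex.I)) + ((c : ℂ) + (d : ℂ) * Complex.I)
    = ((∑ k, f k * g k + c : ℝ) : ℂ) + ((∑ k, f k * h k + d : ℝ) : ℂ) * Complex.I := by
  have e : ∀ k, (f k : ℂ) * ((g k : ℂ) + (h k : ℂ) * Complex.I)
      = ((f k * g k : ℝ) : ℂ) + ((f k * h k : ℝ) : ℂ) * Complex.I := fun k => by
    push_cast; ring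
  rw [Finset.sum_congr rfl fun k _ => e k, Finset.sum_add_distrib, ← Finset.sum_mul]
  push_cast
  ring

set_option maxHeartbeats 1000000 in
/-- with `A` and `Q = Aᵗ(AAᵗ)⁻²A` as before (`n ≥ 2`), complex numbers
`z₁, …, z_{n+1}` are the images under the orthogonal projection `ℝⁿ → ℝ² ≅ ℂ` of the
vertices of a simplex similar to the given one iff `zᵗ Q z = 0` and the `zⱼ` are not all
equal to a single point. -/
theorem simplex_projection_similar (n : ℕ) (hn : 2 ≤ n)
    (A : Matrix (Fin n) (Fin (n + 1)) ℝ)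
    (hrank : A.rank = n) (he : A *ᵥ (fun _ => (1 : ℝ)) = 0)
    (Q : Matrix (Fin (n + 1)) (Fin (n + 1)) ℝ)
    (hQ : Q = Aᵀ * ((A * Aᵀ)⁻¹ ^ 2) * A)
    (z : Fin (n + 1) → ℂ) :
    (∃ s : ℝ, 0 < s ∧ ∃ U : Matrix (Fin n) (Fin n) ℝ, Uᵀ * U = 1 ∧ ∃ a : Fin n → ℝ,
      ∀ j : Fin (n + 1),
        z j = ((s • (U *ᵥ fun k => A k j) + a) ⟨0, by omega⟩ : ℂ) +
              ((s • (U *ᵥ fun k => A k j) + a) ⟨1, by omega⟩ : ℂ) * Complex.I) ↔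
    ((∑ i : Fin (n + 1), ∑ j : Fin (n + 1), (Q i j : ℂ) * z i * z j = 0) ∧
      ¬(∀ i j : Fin (n + 1), z i = z j)) := by
  classical
  set i0 : Fin n := ⟨0, by omega⟩ with hi0
  set i1 : Fin n := ⟨1, by omega⟩ with hi1
  have hne : i0 ≠ i1 := by simp [hi0, hi1, Fin.ext_iff]
  set rc := algebraMap ℝ ℂ with hrc
  set B := A * Aᵀ with hB
  set A' := A.map rc with hA'
  -- invertibility of B
  have hBrank : B.rank = n := by rw [hB, rank_self_mul_transpose, hrank]
  have hBunit : IsUnit B := by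
    rw [← Matrix.mulVec_surjective_iff_isUnit]
    have hrange : LinearMap.range B.mulVecLin = ⊤ := by
      apply Submodule.eq_top_of_finrank_eq
      rw [← Matrix.rank, hBrank, Module.finrank_pi, Fintype.card_fin]
    intro v
    obtain ⟨x, hx⟩ := LinearMap.range_eq_top.mp hrange v
    exact ⟨x, hx⟩
  have hd : IsUnit B.det := (Matrix.isUnit_iff_isUnit_det _).mp hBunit
  -- column sums of A vanish
  have hAe : ∀ k, (∑ j, A k j) = 0 := fun k => by
    have := congrFun he k
    simpa [Matrix.mulVec, dotProduct] using this
  -- basic identities for Q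
  have hAQA : A * Q * Aᵀ = 1 := by
    rw [hQ]
    calc A * (Aᵀ * B⁻¹ ^ 2 * A) * Aᵀ = (A * Aᵀ) * B⁻¹ ^ 2 * (A * Aᵀ) := by
          simp only [Matrix.mul_assoc]
      _ = B * (B⁻¹ * B⁻¹) * B := by rw [← hB, pow_two]
      _ = (B * B⁻¹) * (B⁻¹ * B) := by simp only [Matrix.mul_assoc]
      _ = 1 := by rw [Matrix.mul_nonsing_inv _ hd, Matrix.nonsing_inv_mul _ hd, Matrix.one_mul]
  have hQe : Q *ᵥ (fun _ => (1 : ℝ)) = 0 := by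
    rw [hQ, ← Matrix.mulVec_mulVec, ← Matrix.mulVec_mulVec, he, Matrix.mulVec_zero,
      Matrix.mulVec_zero]
  have hQsymm : Qᵀ = Q := by
    rw [hQ, Matrix.transpose_mul, Matrix.transpose_mul, Matrix.transpose_transpose,
      Matrix.transpose_pow, Matrix.transpose_nonsing_inv, Matrix.transpose_mul,
      Matrix.transpose_transpose, ← hB, Matrix.mul_assoc]
  -- the key quadratic-form computation
  set Q' := Q.map rc with hQ'
  have hmvmap : ∀ {k l : Type} [Fintype l] (M : Matrix k l ℝ) (x : l → ℝ),
      (M.map rc) *ᵥ (fun j => rc (x j)) = fun i => rc ((M *ᵥ x) i) := by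
    intro k l _ M x
    funext i
    simp [Matrix.mulVec, dotProduct, Matrix.map_apply, hrc]
  have hone : (fun _ => (1:ℂ) : Fin (n+1) → ℂ) = fun j => rc ((fun _ => (1:ℝ)) j) := by
    funext j; simp [hrc]
  have hQ'e : Q' *ᵥ (fun _ => (1:ℂ)) = 0 := by
    rw [hone, hQ', hmvmap, hQe]
    funext i; simp
  have hQ'symm : Q'ᵀ = Q' := by rw [hQ', ← Matrix.transpose_map, hQsymm]
  have hC1 : A' * Q' * A'ᵀ = 1 := by
    rw [hA', hQ', ← Matrix.transpose_map, ← Matrix.map_mul, ← Matrix.map_mul, hAQA,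
      Matrix.map_one _ (map_zero rc) (map_one rc)]
  have hkey : ∀ (w : Fin n → ℂ) (c : ℂ),
      z = A'ᵀ *ᵥ w + c • (fun _ => (1:ℂ) : Fin (n+1) → ℂ) →
      (∑ i, ∑ j, (Q i j : ℂ) * z i * z j) = w ⬝ᵥ w := by
    intro w c hzv
    have hSdot : (∑ i, ∑ j, (Q i j : ℂ) * z i * z j) = z ⬝ᵥ (Q' *ᵥ z) := by
      simp only [dotProduct, Matrix.mulVec, Finset.mul_sum]
      refine Finset.sum_congr rfl fun i _ => Finset.sum_congr rfl fun j _ => ?_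
      simp only [Matrix.map_apply, hQ']
      show (Q i j : ℂ) * z i * z j = z i * (rc (Q i j) * z j)
      simp only [hrc, Complex.coe_algebraMap]
      ring
    rw [hSdot, hzv]
    rw [Matrix.mulVec_add, Matrix.mulVec_smul, hQ'e, smul_zero, add_zero]
    rw [add_dotProduct, smul_dotProduct]
    have h1 : (fun _ => (1:ℂ) : Fin (n+1) → ℂ) ⬝ᵥ (Q' *ᵥ (A'ᵀ *ᵥ w)) = 0 := by
      rw [Matrix.dotProduct_mulVec]
      have h2 : (fun _ => (1:ℂ) : Fin (n+1) → ℂ) ᵥ* Q' = 0 := by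
        rw [← hQ'symm, Matrix.vecMul_transpose]
        exact hQ'e
      rw [h2, zero_dotProduct]
    rw [h1, smul_zero, add_zero]
    rw [dotProduct_comm, Matrix.dotProduct_mulVec, Matrix.vecMul_transpose,
      Matrix.mulVec_mulVec, Matrix.mulVec_mulVec, hC1, Matrix.one_mulVec,
      dotProduct_comm]
  constructor
  · -- forward direction
    rintro ⟨s, hs, U, hU, a, hz⟩
    have hUU : U * Uᵀ = 1 := mul_eq_one_comm.mp hU
    have h00 : (∑ k, U i0 k * U i0 k) = 1 := by
      have := congrFun (congrFun hUU i0) i0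
      simpa [Matrix.mul_apply, Matrix.one_apply] using this
    have h11 : (∑ k, U i1 k * U i1 k) = 1 := by
      have := congrFun (congrFun hUU i1) i1
      simpa [Matrix.mul_apply, Matrix.one_apply] using this
    have h01 : (∑ k, U i0 k * U i1 k) = 0 := by
      have := congrFun (congrFun hUU i0) i1
      simpa [Matrix.mul_apply, Matrix.one_apply, hne] using this
    have hz' : ∀ j, z j = ((s * (∑ k, U i0 k * A k j) + a i0 : ℝ) : ℂ)
        + ((s * (∑ k, U i1 k * A k j) + a i1 : ℝ) : ℂ) * Complex.I := by
      intro j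
      rw [hz j]
      show ((s • (U *ᵥ fun k => A k j) + a) i0 : ℂ) +
              ((s • (U *ᵥ fun k => A k j) + a) i1 : ℂ) * Complex.I = _
      simp [Matrix.mulVec, dotProduct]
    set w : Fin n → ℂ := fun k => ((s * U i0 k : ℝ) : ℂ) + ((s * U i1 k : ℝ) : ℂ) * Complex.I
      with hw
    set c : ℂ := ((a i0 : ℝ) : ℂ) + ((a i1 : ℝ) : ℂ) * Complex.I with hc
    have hzv : z = A'ᵀ *ᵥ w + c • (fun _ => (1:ℂ) : Fin (n+1) → ℂ) := by
      funext j
      rw [hz' j]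
      show _ = (∑ k, A'ᵀ j k * w k) + c * 1
      simp only [hA', Matrix.transpose_apply, Matrix.map_apply, hrc, Complex.coe_algebraMap,
        hw, hc, mul_one]
      rw [sum_ofReal_mul (fun k => A k j) (fun k => s * U i0 k) (fun k => s * U i1 k)
        (a i0) (a i1)]
      have ex : ∀ (i : Fin n), s * (∑ k, U i k * A k j) + a i
          = (∑ k, A k j * (s * U i k)) + a i := fun i => by
        rw [Finset.mul_sum]
        congr 1
        exact Finset.sum_congr rfl fun k _ => by ring
      rw [ex i0, ex i1]
    constructor
    · rw [hkey w c hzv]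
      have hdw : w ⬝ᵥ w = ∑ k, w k * w k := rfl
      rw [hdw, hw]
      rw [dot_sq_aux (fun k => s * U i0 k) (fun k => s * U i1 k)]
      have e0 : (∑ k, (s * U i0 k) * (s * U i0 k)) = s^2 * ∑ k, U i0 k * U i0 k := by
        rw [Finset.mul_sum]; exact Finset.sum_congr rfl fun k _ => by ring
      have e1 : (∑ k, (s * U i1 k) * (s * U i1 k)) = s^2 * ∑ k, U i1 k * U i1 k := by
        rw [Finset.mul_sum]; exact Finset.sum_congr rfl fun k _ => by ring
      have e2 : (∑ k, (s * U i0 k) * (s * U i1 k)) = s^2 * ∑ k, U i0 k * U i1 k := by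
        rw [Finset.mul_sum]; exact Finset.sum_congr rfl fun k _ => by ring
      rw [e0, e1, e2, h00, h11, h01]
      simp
    · -- nondegeneracy
      intro hall
      set r : Fin (n+1) → ℝ := fun j => ∑ k, U i0 k * A k j with hr
      have hrc2 : ∀ j j', r j = r j' := by
        intro j j'
        have h := congrArg Complex.re ((hz' j).symm.trans ((hall j j').trans (hz' j')))
        simp only [Complex.add_re, Complex.ofReal_re, Complex.mul_re, Complex.I_re,
          Complex.ofReal_im, Complex.I_im] at h
        have h2 : s * r j = s * r j' := by rw [hr]; dsimp only; linarith
        exact mul_left_cancel₀ (ne_of_gt hs) h2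
      have hsum : (∑ j, r j) = 0 := by
        rw [hr]
        rw [Finset.sum_comm]
        calc (∑ k, ∑ j, U i0 k * A k j) = ∑ k, U i0 k * ∑ j, A k j := by
              exact Finset.sum_congr rfl fun k _ => (Finset.mul_sum _ _ _).symm
          _ = 0 := by simp [hAe]
      have hr0 : ∀ j, r j = 0 := by
        have hconst : (∑ j, r j) = (n+1) * r 0 := by
          rw [Finset.sum_congr rfl fun j _ => hrc2 j 0]
          simp [Finset.card_univ, mul_comm]
        intro j
        rw [hrc2 j 0]
        have : ((n:ℝ)+1) * r 0 = 0 := by rw [← hconst]; exact hsum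
        have hn1 : ((n:ℝ)+1) ≠ 0 := by positivity
        exact (mul_eq_zero.mp this).resolve_left hn1
      -- deduce the row is zero, contradiction
      have hBu : B *ᵥ (fun k => U i0 k) = 0 := by
        rw [hB, ← Matrix.mulVec_mulVec]
        have : Aᵀ *ᵥ (fun k => U i0 k) = 0 := by
          funext j
          have := hr0 j
          simpa [Matrix.mulVec, dotProduct, Matrix.transpose_apply, hr,
            mul_comm] using this
        rw [this, Matrix.mulVec_zero]
      have hinj : Function.Injective B.mulVec := Matrix.mulVec_injective_iff_isUnit.mpr hBunit
      have hu0 : (fun k => U i0 k) = (0 : Fin n → ℝ) := by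
        apply hinj
        rw [hBu, Matrix.mulVec_zero]
      have : (1:ℝ) = 0 := by
        rw [← h00]
        rw [Finset.sum_congr rfl fun k _ => by rw [congrFun hu0 k]]
        simp
      norm_num at this
  · -- backward direction
    rintro ⟨hS, hnc⟩
    -- kernel of A is spanned by the all-ones vector
    have hker : ∀ r : Fin (n+1) → ℝ, A *ᵥ r = 0 → ∃ t : ℝ, ∀ j, r j = t := by
      have hone' : (fun _ => (1:ℝ) : Fin (n+1) → ℝ) ≠ 0 := by
        intro h; exact one_ne_zero (congrFun h 0)
      have hker1 : Module.finrank ℝ (LinearMap.ker A.mulVecLin) = 1 := by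
        have h2 := LinearMap.finrank_range_add_finrank_ker A.mulVecLin
        rw [← Matrix.rank, hrank, Module.finrank_pi, Fintype.card_fin] at h2
        omega
      have hle : (ℝ ∙ (fun _ => (1:ℝ) : Fin (n+1) → ℝ)) ≤ LinearMap.ker A.mulVecLin := by
        rw [Submodule.span_singleton_le_iff_mem, LinearMap.mem_ker, Matrix.mulVecLin_apply]
        exact he
      have heq : (ℝ ∙ (fun _ => (1:ℝ) : Fin (n+1) → ℝ)) = LinearMap.ker A.mulVecLin :=
        Submodule.eq_of_le_of_finrank_eq hle (by rw [finrank_span_singleton hone', hker1])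
      intro r hr
      have : r ∈ (ℝ ∙ (fun _ => (1:ℝ) : Fin (n+1) → ℝ)) := by
        rw [heq, LinearMap.mem_ker, Matrix.mulVecLin_apply]; exact hr
      obtain ⟨t, ht⟩ := Submodule.mem_span_singleton.mp this
      exact ⟨t, fun j => by rw [← ht]; simp⟩
    -- decompose z
    set w : Fin n → ℂ := ((B⁻¹).map rc) *ᵥ (A' *ᵥ z) with hw
    have hBB' : A' * A'ᵀ = B.map rc := by
      rw [hA', ← Matrix.transpose_map, ← Matrix.map_mul, hB]
    have hAd : A' *ᵥ (z - A'ᵀ *ᵥ w) = 0 := by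
      rw [Matrix.mulVec_sub, hw, Matrix.mulVec_mulVec, Matrix.mulVec_mulVec,
        hBB', ← Matrix.map_mul, Matrix.mul_nonsing_inv _ hd,
        Matrix.map_one _ (map_zero rc) (map_one rc), Matrix.one_mulVec, sub_self]
    obtain ⟨t0, ht0⟩ := hker (fun j => ((z - A'ᵀ *ᵥ w) j).re) (by
      funext k
      have h := congrArg Complex.re (congrFun hAd k)
      simpa [Matrix.mulVec, dotProduct, Complex.re_sum, Matrix.map_apply, hA', hrc]
        using h)
    obtain ⟨t1, ht1⟩ := hker (fun j => ((z - A'ᵀ *ᵥ w) j).im) (by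
      funext k
      have h := congrArg Complex.im (congrFun hAd k)
      simpa [Matrix.mulVec, dotProduct, Complex.im_sum, Matrix.map_apply, hA', hrc]
        using h)
    set c : ℂ := ((t0 : ℝ) : ℂ) + ((t1 : ℝ) : ℂ) * Complex.I with hcdef
    have hzv : z = A'ᵀ *ᵥ w + c • (fun _ => (1:ℂ) : Fin (n+1) → ℂ) := by
      funext j
      have h0 := ht0 j
      have h1 := ht1 j
      simp only [Pi.sub_apply, Complex.sub_re, Complex.sub_im] at h0 h1
      apply Complex.ext <;>
        simp only [Pi.add_apply, Pi.smul_apply, smul_eq_mul, mul_one, Complex.add_re,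
          Complex.add_im, hcdef, Complex.ofReal_re, Complex.ofReal_im, Complex.mul_re,
          Complex.mul_im, Complex.I_re, Complex.I_im] <;> nlinarith [h0, h1]
    set p : Fin n → ℝ := fun k => (w k).re with hp
    set q : Fin n → ℝ := fun k => (w k).im with hq
    have hwk : ∀ k, w k = ((p k : ℝ) : ℂ) + ((q k : ℝ) : ℂ) * Complex.I := fun k =>
      (Complex.re_add_im (w k)).symm
    have hww : w ⬝ᵥ w = ((∑ k, p k * p k : ℝ) : ℂ) - ((∑ k, q k * q k : ℝ) : ℂ)
        + 2 * ((∑ k, p k * q k : ℝ) : ℂ) * Complex.I := by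
      have : w ⬝ᵥ w = ∑ k, (((p k : ℂ) + q k * Complex.I) * ((p k : ℂ) + q k * Complex.I)) := by
        exact Finset.sum_congr rfl fun k _ => by rw [← hwk k]
      rw [this, dot_sq_aux]
    have hzero : ((∑ k, p k * p k : ℝ) : ℂ) - ((∑ k, q k * q k : ℝ) : ℂ)
        + 2 * ((∑ k, p k * q k : ℝ) : ℂ) * Complex.I = 0 := by
      rw [← hww, ← hkey w c hzv]
      exact hS
    have hPQ : (∑ k, p k * p k) = (∑ k, q k * q k) ∧ (∑ k, p k * q k) = 0 := by
      rw [Complex.ext_iff] at hzero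
      obtain ⟨h1, h2⟩ := hzero
      simp only [Complex.add_re, Complex.sub_re, Complex.ofReal_re, Complex.mul_re,
        Complex.mul_im, Complex.I_re, Complex.I_im, Complex.ofReal_im, Complex.add_im,
        Complex.sub_im, Complex.zero_re, Complex.zero_im] at h1 h2
      norm_num at h1 h2
      constructor <;> nlinarith [h1, h2]
    have hPpos : 0 < (∑ k, p k * p k) := by
      rcases lt_or_eq_of_le (Finset.sum_nonneg fun k _ => mul_self_nonneg (p k)) with h | h
      · exact h
      exfalso
      have hp0 : ∀ k, p k = 0 := by
        intro k
        have := (Finset.sum_eq_zero_iff_of_nonneg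
          (fun k _ => mul_self_nonneg (p k))).mp h.symm k (Finset.mem_univ k)
        exact mul_self_eq_zero.mp this
      have hq0 : ∀ k, q k = 0 := by
        intro k
        have hQ0 : (∑ k, q k * q k) = 0 := by rw [← hPQ.1, ← h]
        have := (Finset.sum_eq_zero_iff_of_nonneg
          (fun k _ => mul_self_nonneg (q k))).mp hQ0 k (Finset.mem_univ k)
        exact mul_self_eq_zero.mp this
      have hw0 : ∀ k, w k = 0 := fun k => by rw [hwk k, hp0 k, hq0 k]; simp
      apply hnc
      intro i j
      have hzc : ∀ j, z j = c := by
        intro j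
        rw [congrFun hzv j]
        show (∑ k, A'ᵀ j k * w k) + c * 1 = c
        rw [Finset.sum_congr rfl fun k _ => by rw [hw0 k, mul_zero]]
        simp
      rw [hzc i, hzc j]
    set s : ℝ := Real.sqrt (∑ k, p k * p k) with hsdef
    have hs : 0 < s := Real.sqrt_pos.mpr hPpos
    have hs2 : s * s = (∑ k, p k * p k) := Real.mul_self_sqrt hPpos.le
    -- orthonormal extension
    set u : EuclideanSpace ℝ (Fin n) := WithLp.toLp 2 (fun k => s⁻¹ * p k) with hu
    set v : EuclideanSpace ℝ (Fin n) := WithLp.toLp 2 (fun k => s⁻¹ * q k) with hv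
    have hnorm : ∀ (x y : Fin n → ℝ) (h : (∑ k, x k * y k) = s * s),
        (∑ k, (s⁻¹ * x k) * (s⁻¹ * y k)) = 1 := by
      intro x y h
      have : (∑ k, (s⁻¹ * x k) * (s⁻¹ * y k)) = s⁻¹ * s⁻¹ * ∑ k, x k * y k := by
        rw [Finset.mul_sum]; exact Finset.sum_congr rfl fun k _ => by ring
      rw [this, h]
      field_simp
    have huu : (∑ k, u k * u k) = 1 := hnorm p p hs2.symm ▸ hnorm p p (by rw [hs2])
    have hvv : (∑ k, v k * v k) = 1 := hnorm q q (by rw [hs2, hPQ.1])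
    have huv : (∑ k, u k * v k) = 0 := by
      have : (∑ k, (s⁻¹ * p k) * (s⁻¹ * q k)) = s⁻¹ * s⁻¹ * ∑ k, p k * q k := by
        rw [Finset.mul_sum]; exact Finset.sum_congr rfl fun k _ => by ring
      rw [hu, hv]
      show (∑ k, (s⁻¹ * p k) * (s⁻¹ * q k)) = 0
      rw [this, hPQ.2, mul_zero]
    have hext : ∃ U : Matrix (Fin n) (Fin n) ℝ, Uᵀ * U = 1 ∧
        (∀ k, U i0 k = u k) ∧ (∀ k, U i1 k = v k) := by
      set g : Fin n → EuclideanSpace ℝ (Fin n) :=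
        fun i => if i = i0 then u else if i = i1 then v else 0 with hg
      have hinner : ∀ x y : EuclideanSpace ℝ (Fin n), (inner ℝ x y : ℝ) = ∑ k, x k * y k := by
        intro x y
        simp [PiLp.inner_apply, RCLike.inner_apply, conj_trivial, mul_comm]
      have hnu : ‖u‖ = 1 := by
        have h := real_inner_self_eq_norm_sq u
        rw [hinner, huu] at h
        nlinarith [norm_nonneg u]
      have hnv : ‖v‖ = 1 := by
        have h := real_inner_self_eq_norm_sq v
        rw [hinner, hvv] at h
        nlinarith [norm_nonneg v]
      have hortho : Orthonormal ℝ (Set.restrict {i0, i1} g) := by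
        rw [orthonormal_iff_ite]
        rintro ⟨i, hi⟩ ⟨j, hj⟩
        simp only [Set.mem_insert_iff, Set.mem_singleton_iff] at hi hj
        rcases hi with rfl | rfl <;> rcases hj with rfl | rfl <;>
          simp [Set.restrict, hg, hne, hne.symm, Subtype.ext_iff, hinner, huu, hvv, huv, hnu, hnv,
            mul_comm]
      obtain ⟨b, hb⟩ := hortho.exists_orthonormalBasis_extension_of_card_eq
        (by simp [finrank_euclideanSpace])
      have hb0 : b i0 = u := by rw [hb i0 (by simp)]; simp [hg]
      have hb1 : b i1 = v := by rw [hb i1 (by simp)]; simp [hg, hne.symm, hne]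
      refine ⟨Matrix.of fun i k => b i k, ?_, fun k => by show (b i0) k = u k; rw [hb0],
        fun k => by show (b i1) k = v k; rw [hb1]⟩
      rw [mul_eq_one_comm]
      ext i j
      have := orthonormal_iff_ite.mp b.orthonormal i j
      rw [hinner] at this
      simp [Matrix.mul_apply, Matrix.one_apply, this]
    obtain ⟨U, hUorth, hU0, hU1⟩ := hext
    refine ⟨s, hs, U, hUorth, fun i => if i = i1 then t1 else t0, fun j => ?_⟩
    show z j = (((s • (U *ᵥ fun k => A k j) + fun i => if i = i1 then t1 else t0) i0 : ℝ) : ℂ)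
        + (((s • (U *ᵥ fun k => A k j) + fun i => if i = i1 then t1 else t0) i1 : ℝ) : ℂ)
          * Complex.I
    have hre : (s • (U *ᵥ fun k => A k j) + fun i => if i = i1 then t1 else t0) i0
        = (∑ k, p k * A k j) + t0 := by
      simp only [Pi.add_apply, Pi.smul_apply, smul_eq_mul, Matrix.mulVec, dotProduct,
        if_neg hne]
      rw [Finset.mul_sum]
      congr 1
      refine Finset.sum_congr rfl fun k _ => ?_
      rw [hU0 k, hu]
      show s * (s⁻¹ * p k * A k j) = p k * A k j
      field_simp
    have him : (s • (U *ᵥ fun k => A k j) + fun i => if i = i1 then t1 else t0) i1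
        = (∑ k, q k * A k j) + t1 := by
      simp only [Pi.add_apply, Pi.smul_apply, smul_eq_mul, Matrix.mulVec, dotProduct,
        if_pos rfl]
      rw [Finset.mul_sum]
      congr 1
      refine Finset.sum_congr rfl fun k _ => ?_
      rw [hU1 k, hv]
      show s * (s⁻¹ * q k * A k j) = q k * A k j
      field_simp
    rw [hre, him, congrFun hzv j]
    show (∑ k, A'ᵀ j k * w k) + c * 1 = _
    simp only [hA', Matrix.transpose_apply, Matrix.map_apply, hrc, Complex.coe_algebraMap,
      mul_one, hcdef]
    rw [Finset.sum_congr rfl fun k _ => by rw [hwk k]]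
    rw [sum_ofReal_mul (fun k => A k j) p q t0 t1]
    have ex : ∀ x : Fin n → ℝ, (∑ k, A k j * x k) = ∑ k, x k * A k j := fun x =>
      Finset.sum_congr rfl fun k _ => mul_comm _ _
    rw [ex p, ex q]
end

section
/- If the 8 vertices of a cube in ℝ³ are orthogonally projected to z₁, ..., z₈ ∈ ℂ, then (z₁ + ⋯ + z₈)² = 8(z₁² + ⋯ + z₈²). -/
open Matrix Complex

/-
The projection of the cube is `z_ε = c + ε₀ w₀ + ε₁ w₁ + ε₂ w₂`, where `c` is the projected
translation and `w_j = s (U₀ⱼ + U₁ⱼ i)` are the projected edges. A polynomial identity gives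
`8 ∑ z_ε² - (∑ z_ε)² = 16 (w₀² + w₁² + w₂²)`, and the right-hand side vanishes because the
first two rows of an orthogonal matrix are orthonormal, i.e. `∑ⱼ (U₀ⱼ + U₁ⱼ i)² = 0`.
-/

theorem sum_sq_row_add_row_mul_I_eq_zero {n : Type*} [Fintype n] [DecidableEq n]
    {U : Matrix n n ℝ} (hU : Uᵀ * U = 1) {i k : n} (hik : i ≠ k) :
    ∑ j, ((U i j : ℂ) + U k j * I) ^ 2 = 0 := by
  have hUUt : U * Uᵀ = 1 := mul_eq_one_comm.mp hU
  have row_inner (p q : n) : ∑ j, U p j * U q j = (1 : Matrix n n ℝ) p q := by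
    rw [← hUUt, mul_apply]
    simp only [transpose_apply]
  calc ∑ j, ((U i j : ℂ) + U k j * I) ^ 2
      = ((∑ j, U i j * U i j : ℝ) : ℂ) - ((∑ j, U k j * U k j : ℝ) : ℂ)
          + 2 * I * ((∑ j, U i j * U k j : ℝ) : ℂ) := by
        push_cast
        rw [Finset.mul_sum, ← Finset.sum_sub_distrib, ← Finset.sum_add_distrib]
        refine Finset.sum_congr rfl fun j _ => ?_
        linear_combination ((U k j : ℂ) ^ 2) * I_sq
    _ = 0 := by simp [row_inner, one_apply_ne hik]

theorem cube_vertices_sum_sq_identity {R : Type*} [CommRing R] (c w₀ w₁ w₂ : R) :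
    (∑ ε : Fin 2 × Fin 2 × Fin 2, (c + ε.1 * w₀ + ε.2.1 * w₁ + ε.2.2 * w₂)) ^ 2
      + 16 * (w₀ ^ 2 + w₁ ^ 2 + w₂ ^ 2)
      = 8 * ∑ ε : Fin 2 × Fin 2 × Fin 2, (c + ε.1 * w₀ + ε.2.1 * w₁ + ε.2.2 * w₂) ^ 2 := by
  simp only [Fintype.sum_prod_type, Fin.sum_univ_two, Fin.val_zero, Fin.val_one,
    Nat.cast_zero, Nat.cast_one]
  ring

theorem cube_vertices_projection_general (s : ℝ)
    (U : Matrix (Fin 3) (Fin 3) ℝ) (hU : Uᵀ * U = 1) (a : Fin 3 → ℝ)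
    (z : Fin 2 × Fin 2 × Fin 2 → ℂ)
    (hz : ∀ ε : Fin 2 × Fin 2 × Fin 2,
      z ε = ((s • (U *ᵥ ![(ε.1 : ℝ), (ε.2.1 : ℝ), (ε.2.2 : ℝ)]) + a) 0 : ℂ) +
            ((s • (U *ᵥ ![(ε.1 : ℝ), (ε.2.1 : ℝ), (ε.2.2 : ℝ)]) + a) 1 : ℂ) * Complex.I) :
    (∑ ε : Fin 2 × Fin 2 × Fin 2, z ε) ^ 2 =
      8 * ∑ ε : Fin 2 × Fin 2 × Fin 2, (z ε) ^ 2 := by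
  set w : Fin 3 → ℂ := fun j => s * ((U 0 j : ℂ) + U 1 j * I) with hw
  have hz_affine : ∀ ε : Fin 2 × Fin 2 × Fin 2,
      z ε = (a 0 + a 1 * I) + ε.1 * w 0 + ε.2.1 * w 1 + ε.2.2 * w 2 := by
    intro ε
    simp only [hz, hw, mulVec, dotProduct, Fin.sum_univ_three, Pi.add_apply, Pi.smul_apply,
      smul_eq_mul, cons_val_zero, cons_val_one, cons_val_two, head_cons, tail_cons]
    push_cast
    ring
  have isotropic : w 0 ^ 2 + w 1 ^ 2 + w 2 ^ 2 = 0 := by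
    have h := sum_sq_row_add_row_mul_I_eq_zero hU (i := 0) (k := 1) (by decide)
    rw [Fin.sum_univ_three] at h
    linear_combination (s : ℂ) ^ 2 * h
  simp only [hz_affine]
  linear_combination
    cube_vertices_sum_sq_identity (a 0 + a 1 * I : ℂ) (w 0) (w 1) (w 2) - 16 * isotropic

/-- if the 8 vertices of a cube in `ℝ³` (the image of the standard unit cube
`{0,1}³` under a similarity) are orthogonally projected to complex numbers `z_ε`, then
`(∑ z_ε)² = 8 ∑ z_ε²`. -/
theorem cube_vertices_projection (s : ℝ) (hs : 0 < s)
    (U : Matrix (Fin 3) (Fin 3) ℝ) (hU : Uᵀ * U = 1) (a : Fin 3 → ℝ)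
    (z : Fin 2 × Fin 2 × Fin 2 → ℂ)
    (hz : ∀ ε : Fin 2 × Fin 2 × Fin 2,
      z ε = ((s • (U *ᵥ ![(ε.1 : ℝ), (ε.2.1 : ℝ), (ε.2.2 : ℝ)]) + a) 0 : ℂ) +
            ((s • (U *ᵥ ![(ε.1 : ℝ), (ε.2.1 : ℝ), (ε.2.2 : ℝ)]) + a) 1 : ℂ) * Complex.I) :
    (∑ ε : Fin 2 × Fin 2 × Fin 2, z ε) ^ 2 =
      8 * ∑ ε : Fin 2 × Fin 2 × Fin 2, (z ε) ^ 2 :=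
  cube_vertices_projection_general s U hU a z hz
end

section
/- If the vertices of a regular octahedron in ℝ³ (i.e. ±s·u₁, ±s·u₂, ±s·u₃ for an orthonormal basis u₁,u₂,u₃, s > 0, up to translation) are orthogonally projected to z₁, ..., z₆ ∈ ℂ, then (z₁ + ⋯ + z₆)² = 6(z₁² + ⋯ + z₆²). -/
open Complex Matrix

/-- if the vertices `a ± s uⱼ` of a regular octahedron in `ℝ³` (`u` an
orthonormal basis, `s > 0`, `a` a translation) are orthogonally projected to `ℂ`, then
`(∑ z)² = 6 ∑ z²`. -/
theorem octahedron_vertices_projection (s : ℝ) (hs : 0 < s)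
    (u : Fin 3 → EuclideanSpace ℝ (Fin 3)) (hu : Orthonormal ℝ u)
    (a : EuclideanSpace ℝ (Fin 3)) (p q : Fin 3 → ℂ)
    (hp : ∀ j, p j = ((a + s • u j) 0 : ℂ) + ((a + s • u j) 1 : ℂ) * Complex.I)
    (hq : ∀ j, q j = ((a - s • u j) 0 : ℂ) + ((a - s • u j) 1 : ℂ) * Complex.I) :
    (∑ j, p j + ∑ j, q j) ^ 2 = 6 * (∑ j, (p j) ^ 2 + ∑ j, (q j) ^ 2) := by
  set M : Matrix (Fin 3) (Fin 3) ℝ := Matrix.of (fun j i => u j i) with hM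
  have h1 : M * Mᵀ = 1 := by
    ext i j
    have := orthonormal_iff_ite.mp hu i j
    rw [PiLp.inner_apply] at this
    simp only [Matrix.mul_apply, Matrix.transpose_apply, Matrix.one_apply, hM, Matrix.of_apply]
    simpa [mul_comm] using this
  have h2 : Mᵀ * M = 1 := mul_eq_one_comm.mp h1
  have c00 : ∑ j, u j 0 * u j 0 = 1 := by
    have := congrArg (fun m => m 0 0) h2
    simpa [Matrix.mul_apply, Matrix.transpose_apply, hM] using this
  have c11 : ∑ j, u j 1 * u j 1 = 1 := by
    have := congrArg (fun m => m 1 1) h2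
    simpa [Matrix.mul_apply, Matrix.transpose_apply, hM] using this
  have c01 : ∑ j, u j 0 * u j 1 = 0 := by
    have := congrArg (fun m => m 0 1) h2
    simpa [Matrix.mul_apply, Matrix.transpose_apply, hM] using this
  have C00 : ((∑ j, u j 0 * u j 0 : ℝ) : ℂ) = 1 := by rw [c00]; norm_num
  have C11 : ((∑ j, u j 1 * u j 1 : ℝ) : ℂ) = 1 := by rw [c11]; norm_num
  have C01 : ((∑ j, u j 0 * u j 1 : ℝ) : ℂ) = 0 := by rw [c01]; norm_num
  simp only [Fin.sum_univ_three, hp, hq, PiLp.add_apply, PiLp.sub_apply, PiLp.smul_apply,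
    smul_eq_mul] at *
  push_cast at C00 C11 C01 ⊢
  linear_combination (-12*s^2) * C00 + (-24*s^2*I) * C01 + (-12*s^2*I^2) * C11 +
    (-12*s^2) * Complex.I_sq
end
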